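/- arXiv:2103.06024 — 5 statements merged into one kernel-verified Lean document; each statement's English description precedes it below -/
import Mathlib

section
/- For two unit vectors y₁, y₂ ∈ R^d with |y₁ᵀ y₂| ≤ 1 - ε for some ε ∈ (0,1], the smallest eigenvalue of π_{y₁} + π_{y₂} is bounded below by a positive constant depending only on ε; equivalently, for every unit vector x, xᵀ(π_{y₁} + π_{y₂})x ≥ c(ε) > 0. -/
open Matrix

/-- The orthogonal projection matrix `π_y = I_d - y yᵀ`. -/
noncomputable def proj {d : ℕ} (y : Fin d → ℝ) : Matrix (Fin d) (Fin d) ℝ :=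
  1 - Matrix.vecMulVec y y

/-- For unit vectors `y₁, y₂` with `|y₁ᵀy₂| ≤ 1 - ε` (`0 < ε ≤ 1`), the quadratic
form of `π_{y₁} + π_{y₂}` on unit vectors is bounded below by a positive constant
`c(ε)` depending only on `ε` (and not on `d`, `y₁`, `y₂`, `x`). -/
theorem stmt_4 (ε : ℝ) (hε0 : 0 < ε) (hε1 : ε ≤ 1) :
    ∃ c > 0, ∀ (d : ℕ), 2 ≤ d → ∀ y₁ y₂ x : Fin d → ℝ,
      (∑ i, y₁ i ^ 2 = 1) → (∑ i, y₂ i ^ 2 = 1) → (∑ i, x i ^ 2 = 1) →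
      |y₁ ⬝ᵥ y₂| ≤ 1 - ε →
      c ≤ x ⬝ᵥ (proj y₁ + proj y₂).mulVec x := by
  refine ⟨ε, hε0, fun d _ y₁ y₂ x hy₁ hy₂ hx ht => ?_⟩
  set a := y₁ ⬝ᵥ x with ha
  set b := y₂ ⬝ᵥ x with hb
  set t := y₁ ⬝ᵥ y₂ with htt
  have habs := abs_le.mp ht
  -- Cauchy-Schwarz on x and a • y₁ + b • y₂
  have hcs := Finset.sum_mul_sq_le_sq_mul_sq Finset.univ x (fun i => a * y₁ i + b * y₂ i)
  have h1 : ∑ i, x i * (a * y₁ i + b * y₂ i) = a ^ 2 + b ^ 2 := by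
    simp only [mul_add, Finset.sum_add_distrib]
    have e1 : ∑ i, x i * (a * y₁ i) = a * ∑ i, y₁ i * x i := by
      rw [Finset.mul_sum]; exact Finset.sum_congr rfl fun i _ => by ring
    have e2 : ∑ i, x i * (b * y₂ i) = b * ∑ i, y₂ i * x i := by
      rw [Finset.mul_sum]; exact Finset.sum_congr rfl fun i _ => by ring
    rw [e1, e2]
    simp only [ha, hb, dotProduct]
    ring
  have h2 : ∑ i, (a * y₁ i + b * y₂ i) ^ 2 = a ^ 2 + b ^ 2 + 2 * a * b * t := by
    have : ∀ i, (a * y₁ i + b * y₂ i) ^ 2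
        = a ^ 2 * y₁ i ^ 2 + b ^ 2 * y₂ i ^ 2 + 2 * a * b * (y₁ i * y₂ i) := fun i => by ring
    simp only [this, Finset.sum_add_distrib, ← Finset.mul_sum, hy₁, hy₂]
    simp [htt, dotProduct]
  rw [h1, h2, hx, one_mul] at hcs
  -- key bound: a^2 + b^2 ≤ 2 - ε
  have key : a ^ 2 + b ^ 2 ≤ 2 - ε := by
    nlinarith [sq_nonneg (a + b), sq_nonneg (a - b), sq_nonneg a, sq_nonneg b,
      mul_nonneg (by linarith [habs.2] : (0:ℝ) ≤ 1 - ε - t) (sq_nonneg (a + b)),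
      mul_nonneg (by linarith [habs.1] : (0:ℝ) ≤ 1 - ε + t) (sq_nonneg (a - b))]
  -- compute the quadratic form
  have hq : x ⬝ᵥ (proj y₁ + proj y₂).mulVec x = 2 - a ^ 2 - b ^ 2 := by
    have hid : x ⬝ᵥ (1 : Matrix (Fin d) (Fin d) ℝ).mulVec x = 1 := by
      rw [Matrix.one_mulVec]
      simpa [dotProduct, sq] using hx
    have hvm : ∀ y : Fin d → ℝ, x ⬝ᵥ (Matrix.vecMulVec y y).mulVec x = (y ⬝ᵥ x) ^ 2 := by
      intro y
      simp only [Matrix.vecMulVec_eq Unit, Matrix.mulVec_mulVec]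
      simp only [dotProduct, Matrix.mulVec, Matrix.mul_apply, Matrix.col_apply,
        Matrix.row_apply, dotProduct, Finset.sum_mul, Finset.mul_sum]
      rw [sq, Finset.sum_mul]
      refine Finset.sum_congr rfl fun i _ => ?_
      simp [Finset.mul_sum, Finset.sum_mul]
      refine Finset.sum_congr rfl fun j _ => by ring
    simp only [proj, Matrix.add_mulVec, Matrix.sub_mulVec, dotProduct_add, dotProduct_sub]
    rw [hid]
    have := hvm y₁
    have := hvm y₂
    simp only [dotProduct] at *
    rw [hvm y₁, hvm y₂, ← ha, ← hb]
    ring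
  rw [hq]
  linarith
end

section
/- The bearing Laplacian L_B(p) = H̄ᵀ Π H̄, where H̄ = H ⊗ I_d and Π = diag(π_{ḡ_k}), is symmetric positive semidefinite, and its null space contains both span(U) (with U = 1_n ⊗ I_d) and the configuration vector p itself; consequently rank(L_B) ≤ dn - d - 1 when the graph is connected. -/
open Matrix

open Kronecker

/-- The oriented incidence matrix. -/
def incMat (n m : ℕ) (e : Fin m → Fin n × Fin n) : Matrix (Fin m) (Fin n) ℝ :=
  fun k i => if i = (e k).1 then 1 else if i = (e k).2 then -1 else 0

/-- The matrix `U = 1_n ⊗ I_d`. -/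
def Umat (n d : ℕ) : Matrix (Fin n × Fin d) (Fin d) ℝ :=
  fun p j => if p.2 = j then 1 else 0

/-- Block diagonal matrix `Π = blkdiag(π_{g 1}, …, π_{g m})`. -/
noncomputable def blkProj {m d : ℕ} (g : Fin m → Fin d → ℝ) :
    Matrix (Fin m × Fin d) (Fin m × Fin d) ℝ :=
  fun p q => if p.1 = q.1 then proj (g p.1) p.2 q.2 else 0

/- Auxiliary lemmas -/

lemma sum_inc_mul {n : ℕ} (a b : Fin n) (hab : a ≠ b) (f : Fin n → ℝ) :
    ∑ i, (if i = a then (1:ℝ) else if i = b then -1 else 0) * f i = f a - f b := by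
  have h : ∀ i : Fin n, (if i = a then (1:ℝ) else if i = b then -1 else 0) * f i
      = (if i = a then f i else 0) + (if i = b then -f i else 0) := by
    intro i
    by_cases h1 : i = a
    · subst h1; simp [hab]
    · by_cases h2 : i = b <;> simp [h1, h2, Ne.symm hab]
  simp only [h]
  rw [Finset.sum_add_distrib]
  simp [Finset.sum_ite_eq']
  ring

lemma proj_apply {d : ℕ} (y : Fin d → ℝ) (a b : Fin d) :
    proj y a b = (if a = b then 1 else 0) - y a * y b := by
  simp [proj, Matrix.sub_apply, Matrix.one_apply, Matrix.vecMulVec_apply]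

lemma proj_symm {d : ℕ} (y : Fin d → ℝ) (a b : Fin d) :
    proj y b a = proj y a b := by
  rw [proj_apply, proj_apply, mul_comm]
  congr 1
  simp [eq_comm]

lemma proj_idem {d : ℕ} (y : Fin d → ℝ) (hy : ∑ b, y b * y b = 1) :
    proj y * proj y = proj y := by
  have hA : Matrix.vecMulVec y y * Matrix.vecMulVec y y = Matrix.vecMulVec y y := by
    ext a b
    simp only [Matrix.mul_apply, Matrix.vecMulVec_apply]
    calc ∑ c, y a * y c * (y c * y b) = (y a * y b) * ∑ c, y c * y c := by
          rw [Finset.mul_sum]; exact Finset.sum_congr rfl fun c _ => by ring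
      _ = y a * y b := by rw [hy, mul_one]
  unfold proj
  rw [sub_mul, one_mul, mul_sub, mul_one, hA]
  abel

lemma blkProj_transpose {m d : ℕ} (g : Fin m → Fin d → ℝ) :
    (blkProj g)ᵀ = blkProj g := by
  ext ⟨k, a⟩ ⟨l, b⟩
  simp only [Matrix.transpose_apply, blkProj]
  by_cases h : k = l
  · subst h; simp [proj_symm]
  · simp [h, Ne.symm h]

lemma blkProj_idem {m d : ℕ} (g : Fin m → Fin d → ℝ)
    (hy : ∀ k, ∑ b, g k b * g k b = 1) :
    blkProj g * blkProj g = blkProj g := by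
  ext ⟨k, a⟩ ⟨l, b⟩
  simp only [Matrix.mul_apply, blkProj]
  rw [Fintype.sum_prod_type]
  by_cases h : k = l
  · subst h
    rw [Finset.sum_eq_single k]
    · simp only [eq_self_iff_true, if_true]
      rw [← Matrix.mul_apply, proj_idem (g k) (hy k)]
    · intro r _ hr
      apply Finset.sum_eq_zero
      intro c _
      simp [Ne.symm hr]
    · intro hk; exact absurd (Finset.mem_univ k) hk
  · rw [if_neg h]
    apply Finset.sum_eq_zero
    intro r _
    apply Finset.sum_eq_zero
    intro c _
    by_cases hr : k = r
    · subst hr; simp [h]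
    · simp [hr]

/-- The bearing Laplacian `L_B = H̄ᵀ Π H̄` of a formation with well-defined
bearings is symmetric positive semidefinite, its null space contains the columns
of `U = 1_n ⊗ I_d` and the configuration `p` itself, and consequently
`rank L_B ≤ dn - d - 1` when the graph is connected. -/
theorem stmt_7 (n m d : ℕ) (hn : 2 ≤ n) (hd : 2 ≤ d)
    (e : Fin m → Fin n × Fin n)
    (hne : ∀ k, (e k).1 ≠ (e k).2)
    (hconn : (SimpleGraph.fromRel
      (fun i j => ∃ k, e k = (i, j) ∨ e k = (j, i))).Connected)
    (p : Fin n × Fin d → ℝ)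
    (edgeVec : Fin m → Fin d → ℝ)
    (hedge : ∀ k a, edgeVec k a = p ((e k).1, a) - p ((e k).2, a))
    (hnz : ∀ k, edgeVec k ≠ 0)
    (g : Fin m → Fin d → ℝ)
    (hg : ∀ k a, g k a = edgeVec k a / Real.sqrt (∑ b, edgeVec k b ^ 2))
    (Hbar : Matrix (Fin m × Fin d) (Fin n × Fin d) ℝ)
    (hHbar : Hbar = incMat n m e ⊗ₖ (1 : Matrix (Fin d) (Fin d) ℝ))
    (LB : Matrix (Fin n × Fin d) (Fin n × Fin d) ℝ)
    (hLB : LB = Hbarᵀ * blkProj g * Hbar) :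
    LB.PosSemidef ∧ LBᵀ = LB ∧
      (∀ j : Fin d, LB.mulVec (fun q => Umat n d q j) = 0) ∧
      LB.mulVec p = 0 ∧
      LB.rank ≤ d * n - d - 1 := by
  -- norms of edge vectors
  have hS : ∀ k, 0 < ∑ b, edgeVec k b ^ 2 := by
    intro k
    have h1 : ∃ b, edgeVec k b ≠ 0 := by
      by_contra hc
      push_neg at hc
      exact hnz k (funext hc)
    obtain ⟨b, hb⟩ := h1
    have : 0 < edgeVec k b ^ 2 := by positivity
    calc (0:ℝ) < edgeVec k b ^ 2 := this
      _ ≤ ∑ b, edgeVec k b ^ 2 := Finset.single_le_sum (f := fun b => edgeVec k b ^ 2)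
          (fun c _ => by positivity) (Finset.mem_univ b)
  have hs : ∀ k, 0 < Real.sqrt (∑ b, edgeVec k b ^ 2) := fun k => Real.sqrt_pos.2 (hS k)
  have hsq : ∀ k, Real.sqrt (∑ b, edgeVec k b ^ 2) ^ 2 = ∑ b, edgeVec k b ^ 2 :=
    fun k => Real.sq_sqrt (hS k).le
  have hgnorm : ∀ k, ∑ b, g k b * g k b = 1 := by
    intro k
    have hsne : Real.sqrt (∑ b, edgeVec k b ^ 2) ≠ 0 := (hs k).ne'
    have : ∑ b, g k b * g k b = (∑ b, edgeVec k b ^ 2) / Real.sqrt (∑ b, edgeVec k b ^ 2) ^ 2 := by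
      rw [Finset.sum_div]
      exact Finset.sum_congr rfl fun b _ => by rw [hg]; ring
    rw [this, hsq, div_self (hS k).ne']
  -- Π is symmetric PSD
  have hPit : (blkProj g)ᵀ = blkProj g := blkProj_transpose g
  have hPiH : (blkProj g)ᴴ = blkProj g := by
    rw [Matrix.conjTranspose_eq_transpose_of_trivial, hPit]
  have hPiPSD : (blkProj g).PosSemidef := by
    have : blkProj g = (blkProj g)ᴴ * blkProj g := by
      rw [hPiH, blkProj_idem g hgnorm]
    rw [this]
    exact Matrix.posSemidef_conjTranspose_mul_self _
  -- LB is PSD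
  have hHbarH : Hbarᴴ = Hbarᵀ := Matrix.conjTranspose_eq_transpose_of_trivial Hbar
  have hPSD : LB.PosSemidef := by
    rw [hLB, ← hHbarH]
    exact hPiPSD.conjTranspose_mul_mul_same Hbar
  have hsymm : LBᵀ = LB := by
    have := hPSD.isHermitian
    rwa [Matrix.IsHermitian, Matrix.conjTranspose_eq_transpose_of_trivial] at this
  -- Hbar applied to U columns is zero
  have hHU : ∀ j : Fin d, Hbar.mulVec (fun q => Umat n d q j) = 0 := by
    intro j
    funext ⟨k, a⟩
    simp only [Matrix.mulVec, hHbar, dotProduct, Pi.zero_apply]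
    rw [Fintype.sum_prod_type]
    have : ∀ i : Fin n, ∑ b : Fin d,
        (incMat n m e ⊗ₖ (1 : Matrix (Fin d) (Fin d) ℝ)) (k, a) (i, b) * Umat n d (i, b) j
        = incMat n m e k i * (if a = j then 1 else 0) := by
      intro i
      rw [Finset.sum_eq_single j]
      · simp [Matrix.kroneckerMap_apply, Umat, Matrix.one_apply]
      · intro b _ hb; simp [Umat, hb]
      · intro hj; exact absurd (Finset.mem_univ j) hj
    simp only [this]
    rw [← Finset.sum_mul]
    have hrow : ∑ i, incMat n m e k i = 0 := by
      have := sum_inc_mul (e k).1 (e k).2 (hne k) (fun _ => (1:ℝ))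
      simpa [incMat] using this
    rw [hrow, zero_mul]
  -- Hbar applied to p is the stacked edge vectors
  have hHp : Hbar.mulVec p = fun q => edgeVec q.1 q.2 := by
    funext ⟨k, a⟩
    simp only [Matrix.mulVec, hHbar, dotProduct]
    rw [Fintype.sum_prod_type]
    have : ∀ i : Fin n, ∑ b : Fin d,
        (incMat n m e ⊗ₖ (1 : Matrix (Fin d) (Fin d) ℝ)) (k, a) (i, b) * p (i, b)
        = incMat n m e k i * p (i, a) := by
      intro i
      rw [Finset.sum_eq_single a]
      · simp [Matrix.kroneckerMap_apply, Matrix.one_apply]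
      · intro b _ hb; simp [Matrix.kroneckerMap_apply, Matrix.one_apply, Ne.symm hb]
      · intro ha; exact absurd (Finset.mem_univ a) ha
    simp only [this]
    have := sum_inc_mul (e k).1 (e k).2 (hne k) (fun i => p (i, a))
    simp only [incMat]
    rw [this, ← hedge]
  -- Π annihilates the stacked edge vectors
  have hPie : (blkProj g).mulVec (fun q => edgeVec q.1 q.2) = 0 := by
    funext ⟨k, a⟩
    simp only [Matrix.mulVec, dotProduct, Pi.zero_apply]
    rw [Fintype.sum_prod_type]
    rw [Finset.sum_eq_single k]
    · have h1 : ∑ b, blkProj g (k, a) (k, b) * edgeVec k b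
          = ∑ b, (((if a = b then 1 else 0) - g k a * g k b) * edgeVec k b) := by
        exact Finset.sum_congr rfl fun b _ => by rw [blkProj, if_pos rfl, proj_apply]
      rw [h1]
      have h2 : ∀ b, ((if a = b then (1:ℝ) else 0) - g k a * g k b) * edgeVec k b
          = (if a = b then edgeVec k b else 0) - g k a * (g k b * edgeVec k b) := by
        intro b; by_cases h : a = b <;> simp [h] <;> ring
      simp only [h2]
      rw [Finset.sum_sub_distrib]
      have h3 : ∑ b, (if a = b then edgeVec k b else 0) = edgeVec k a := by
        simp [Finset.sum_ite_eq]
      have h4 : ∑ b, g k a * (g k b * edgeVec k b)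
          = g k a * ∑ b, g k b * edgeVec k b := by rw [Finset.mul_sum]
      have h5 : ∑ b, g k b * edgeVec k b = Real.sqrt (∑ b, edgeVec k b ^ 2) := by
        have : ∑ b, g k b * edgeVec k b
            = (∑ b, edgeVec k b ^ 2) / Real.sqrt (∑ b, edgeVec k b ^ 2) := by
          rw [Finset.sum_div]
          exact Finset.sum_congr rfl fun b _ => by rw [hg]; ring
        rw [this, Real.div_sqrt]
      rw [h3, h4, h5, hg, div_mul_cancel₀ _ (hs k).ne', sub_self]
    · intro l _ hl
      apply Finset.sum_eq_zero
      intro b _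
      simp [blkProj, Ne.symm hl]
    · intro hk; exact absurd (Finset.mem_univ k) hk
  -- LB kills U columns and p
  have hLU : ∀ j : Fin d, LB.mulVec (fun q => Umat n d q j) = 0 := by
    intro j
    rw [hLB, ← Matrix.mulVec_mulVec, ← Matrix.mulVec_mulVec, hHU j]
    simp
  have hLp : LB.mulVec p = 0 := by
    rw [hLB, ← Matrix.mulVec_mulVec, ← Matrix.mulVec_mulVec, hHp, hPie]
    simp
  refine ⟨hPSD, hsymm, hLU, hLp, ?_⟩
  -- rank bound
  -- there is at least one edge
  have hm : 0 < m := by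
    by_contra hm0
    push_neg at hm0
    interval_cases m
    have h01 : (⟨0, by omega⟩ : Fin n) ≠ ⟨1, by omega⟩ := by
      intro h; simpa using congrArg Fin.val h
    obtain ⟨w⟩ := hconn.preconnected ⟨0, by omega⟩ ⟨1, by omega⟩
    cases w with
    | cons h _ =>
      rw [SimpleGraph.fromRel_adj] at h
      obtain ⟨-, ⟨k, -⟩ | ⟨k, -⟩⟩ := h <;> exact k.elim0
  obtain ⟨k0⟩ : Nonempty (Fin m) := ⟨⟨0, hm⟩⟩
  -- the kernel of mulVecLin LB contains d+1 independent vectors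
  set f := LB.mulVecLin with hf
  set K := LinearMap.ker f with hK
  have hker : ∀ j : Fin d, (fun q : Fin n × Fin d => Umat n d q j) ∈ K := by
    intro j; exact hLU j
  have hkerp : p ∈ K := hLp
  -- the family: p and the d columns of U
  let v : Fin (d + 1) → (Fin n × Fin d → ℝ) :=
    Fin.cons p (fun j q => Umat n d q j)
  have hvK : ∀ i, v i ∈ K := by
    intro i
    refine Fin.cases ?_ ?_ i
    · exact hkerp
    · intro j; exact hker j
  have hli : LinearIndependent ℝ v := by
    rw [Fintype.linearIndependent_iff]
    intro c hc
    have hc' : ∀ q : Fin n × Fin d,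
        c 0 * p q + ∑ j : Fin d, c j.succ * Umat n d q j = 0 := by
      intro q
      have := congrFun hc q
      simpa [v, Fin.sum_univ_succ, Finset.sum_apply] using this
    have hc'' : ∀ (i : Fin n) (a : Fin d), c 0 * p (i, a) + c a.succ = 0 := by
      intro i a
      have := hc' (i, a)
      rwa [Finset.sum_eq_single a (fun b _ hb => by simp [Umat, Ne.symm hb])
        (fun ha => absurd (Finset.mem_univ a) ha), Umat, if_pos rfl, mul_one] at this
    have hc0 : c 0 = 0 := by
      obtain ⟨b, hb⟩ : ∃ b, edgeVec k0 b ≠ 0 := by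
        by_contra hcon
        push_neg at hcon
        exact hnz k0 (funext hcon)
      have h1 := hc'' (e k0).1 b
      have h2 := hc'' (e k0).2 b
      have : c 0 * edgeVec k0 b = 0 := by
        rw [hedge]; nlinarith [h1, h2]
      rcases mul_eq_zero.1 this with h | h
      · exact h
      · exact absurd h hb
    intro i
    refine Fin.cases ?_ ?_ i
    · exact hc0
    · intro a
      have := hc'' ⟨0, by omega⟩ a
      rw [hc0, zero_mul, zero_add] at this
      exact this
  -- lift to the kernel submodule
  let w : Fin (d + 1) → K := fun i => ⟨v i, hvK i⟩
  have hliw : LinearIndependent ℝ w := by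
    have : v = (K.subtype : K →ₗ[ℝ] _) ∘ w := rfl
    rw [this] at hli
    exact LinearIndependent.of_comp _ hli
  have hcard : d + 1 ≤ Module.finrank ℝ K := by
    simpa using hliw.fintype_card_le_finrank
  have hrn : LB.rank + Module.finrank ℝ K = n * d := by
    have := LinearMap.finrank_range_add_finrank_ker f
    rw [Module.finrank_fintype_fun_eq_card] at this
    simpa [Matrix.rank, hK, hf, Fintype.card_prod] using this
  have hmul : n * d = d * n := Nat.mul_comm n d
  omega
end

section
/- Let G be an acyclic connected graph (a tree) on n vertices, so m = n - 1 and rank(H̄) = d(n-1) = dm, i.e., H̄ has full row-dimension image. Then the bearing Laplacian L_B(p(t)) = H̄ᵀΠ(t)H̄ satisfies the PE condition (1/T)∫_t^{t+T} L_B dτ ≥ μ H̄ᵀH̄ (for some T > 0, 0 < μ < 1) if and only if Π(t) satisfies the PE condition (1/T')∫_t^{t+T'} Π dτ ≥ μ' I_{dm} (for some T' > 0, μ' > 0). -/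
open Matrix

open Kronecker

lemma quad_aux {α β : Type*} [Fintype α] [Fintype β] (A : Matrix α β ℝ)
    (B : Matrix α α ℝ) (x : β → ℝ) :
    x ⬝ᵥ (Aᵀ * B * A).mulVec x = (A.mulVec x) ⬝ᵥ B.mulVec (A.mulVec x) := by
  rw [← Matrix.mulVec_mulVec, ← Matrix.mulVec_mulVec, Matrix.dotProduct_mulVec,
    Matrix.vecMul_transpose]

lemma quadAA_aux {α β : Type*} [Fintype α] [Fintype β] (A : Matrix α β ℝ)
    (x : β → ℝ) :
    x ⬝ᵥ (Aᵀ * A).mulVec x = ∑ q, (A.mulVec x) q ^ 2 := by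
  rw [← Matrix.mulVec_mulVec, Matrix.dotProduct_mulVec, Matrix.vecMul_transpose]
  simp [dotProduct, sq]

/-- For a tree (`m = n - 1`, `H̄ = H ⊗ I_d` surjective), the bearing Laplacian
`L_B = H̄ᵀ Π H̄` satisfies the PE condition relative to `H̄ᵀH̄` (for some `T > 0`,
`0 < μ < 1`) if and only if `Π(t)` satisfies the PE condition (for some `T' > 0`,
`μ' > 0`). Matrix inequalities are stated via quadratic forms. -/
theorem stmt_10 (n m d : ℕ) (hd : 2 ≤ d) (hm : m = n - 1)
    (e : Fin m → Fin n × Fin n)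
    (hne : ∀ k, (e k).1 ≠ (e k).2)
    (hconn : (SimpleGraph.fromRel
      (fun i j => ∃ k, e k = (i, j) ∨ e k = (j, i))).Connected)
    (Hbar : Matrix (Fin m × Fin d) (Fin n × Fin d) ℝ)
    (hHbar : Hbar = incMat n m e ⊗ₖ (1 : Matrix (Fin d) (Fin d) ℝ))
    (hsurj : Function.Surjective Hbar.mulVec)
    (g : ℝ → Fin m → Fin d → ℝ)
    (hmeas : Measurable g)
    (hunit : ∀ t, 0 ≤ t → ∀ k, ∑ a, g t k a ^ 2 = 1) :
    (∃ T > 0, ∃ μ, 0 < μ ∧ μ < 1 ∧ ∀ t ≥ (0 : ℝ), ∀ x : Fin n × Fin d → ℝ,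
        μ * (x ⬝ᵥ (Hbarᵀ * Hbar).mulVec x) ≤
          (1 / T) * ∫ τ in t..(t + T),
            x ⬝ᵥ (Hbarᵀ * blkProj (g τ) * Hbar).mulVec x) ↔
    (∃ T' > 0, ∃ μ' > 0, ∀ t ≥ (0 : ℝ), ∀ w : Fin m × Fin d → ℝ,
        μ' * (∑ q, w q ^ 2) ≤
          (1 / T') * ∫ τ in t..(t + T'), w ⬝ᵥ (blkProj (g τ)).mulVec w) := by
  constructor
  · rintro ⟨T, hT, μ, hμ0, hμ1, h⟩
    refine ⟨T, hT, μ, hμ0, fun t ht w => ?_⟩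
    obtain ⟨x, hx⟩ := hsurj w
    have := h t ht x
    simp only [quad_aux, quadAA_aux, hx] at this
    exact this
  · rintro ⟨T, hT, μ', hμ', h⟩
    refine ⟨T, hT, min μ' (1/2), lt_min hμ' (by norm_num),
      lt_of_le_of_lt (min_le_right _ _) (by norm_num), fun t ht x => ?_⟩
    have := h t ht (Hbar.mulVec x)
    simp only [quad_aux, quadAA_aux]
    refine le_trans ?_ this
    apply mul_le_mul_of_nonneg_right (min_le_left _ _)
    positivity
end

section
/- Let A : [0,∞) → R^{N×N} be piecewise continuous, symmetric positive semidefinite and bounded, and suppose there exist a subspace V ⊆ R^N, T > 0, and μ > 0 such that for every x ∈ V and all t, (1/T) xᵀ ∫_t^{t+T} A(τ)dτ x ≥ μ ‖x‖², and that V is invariant under the flow of ζ̇ = -A(t)ζ (e.g., V = {x : Uᵀx = 0} with UᵀA(t) = 0 for all t). Then the equilibrium ζ = 0 of ζ̇ = -A(t)ζ restricted to initial conditions in V is uniformly globally exponentially stable. -/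
open Matrix MeasureTheory


lemma aux_sum_sq_eq_dot {N : ℕ} (x : Fin N → ℝ) : (∑ j, x j ^ 2) = x ⬝ᵥ x := by
  simp [dotProduct, sq]

lemma aux_symm_dot {N : ℕ} {A : Matrix (Fin N) (Fin N) ℝ} (hAt : Aᵀ = A)
    (u v : Fin N → ℝ) : (A.mulVec u) ⬝ᵥ v = u ⬝ᵥ A.mulVec v := by
  rw [dotProduct_mulVec, ← mulVec_transpose, hAt]

open scoped MatrixOrder in
lemma aux_sqnorm_mulVec_le {N : ℕ} {A : Matrix (Fin N) (Fin N) ℝ} (hA : A.PosSemidef)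
    {C : ℝ} (hC : ∀ x : Fin N → ℝ, x ⬝ᵥ A.mulVec x ≤ C * (∑ j, x j ^ 2)) (x : Fin N → ℝ) :
    (∑ j, (A.mulVec x) j ^ 2) ≤ C * (x ⬝ᵥ A.mulVec x) := by
  set S := CFC.sqrt A with hSdef
  have hS : S.PosSemidef := (CFC.sqrt_nonneg A).posSemidef
  have hSS : S * S = A := CFC.sqrt_mul_sqrt_self A hA.nonneg
  have hSt : Sᵀ = S := (by simpa using hS.1 : S.IsSymm)
  have hAt : Aᵀ = A := by rw [← hSS, transpose_mul, hSt]
  have key : ∀ u v : Fin N → ℝ, (S.mulVec u) ⬝ᵥ (S.mulVec v) = u ⬝ᵥ A.mulVec v := by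
    intro u v
    rw [aux_symm_dot hSt u (S.mulVec v), mulVec_mulVec, hSS]
  have h1 : A.mulVec x = S.mulVec (S.mulVec x) := by rw [mulVec_mulVec, hSS]
  calc (∑ j, (A.mulVec x) j ^ 2) = (A.mulVec x) ⬝ᵥ (A.mulVec x) := aux_sum_sq_eq_dot _
    _ = (S.mulVec x) ⬝ᵥ A.mulVec (S.mulVec x) := by
        conv_lhs => rw [h1, key]
    _ ≤ C * (∑ j, (S.mulVec x) j ^ 2) := hC _
    _ = C * (x ⬝ᵥ A.mulVec x) := by rw [aux_sum_sq_eq_dot, key]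

lemma aux_psd_split {N : ℕ} {B : Matrix (Fin N) (Fin N) ℝ} (hB : B.PosSemidef) (hBt : Bᵀ = B)
    (u v : Fin N → ℝ) :
    (u + v) ⬝ᵥ B.mulVec (u + v) ≤ 2 * (u ⬝ᵥ B.mulVec u) + 2 * (v ⬝ᵥ B.mulVec v) := by
  have h0 : 0 ≤ (u - v) ⬝ᵥ B.mulVec (u - v) := by
    simpa using hB.dotProduct_mulVec_nonneg (u - v)
  have hc : v ⬝ᵥ B.mulVec u = u ⬝ᵥ B.mulVec v := by
    rw [← aux_symm_dot hBt u v, dotProduct_comm]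
  simp only [mulVec_add, mulVec_sub, dotProduct_add, dotProduct_sub, add_dotProduct,
    sub_dotProduct] at *
  linarith

lemma aux_cs_integral {f : ℝ → ℝ} {a b : ℝ} (hab : a ≤ b)
    (hf : IntervalIntegrable f volume a b)
    (hf2 : IntervalIntegrable (fun x => f x ^ 2) volume a b) :
    (∫ x in a..b, f x) ^ 2 ≤ (b - a) * ∫ x in a..b, f x ^ 2 := by
  rcases eq_or_lt_of_le hab with h | h
  · subst h; simp
  set L : ℝ := b - a with hL
  have hLpos : 0 < L := by simp [hL]; linarith
  set c : ℝ := (∫ x in a..b, f x) / L with hc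
  have h0 : (0:ℝ) ≤ ∫ x in a..b, (f x - c) ^ 2 :=
    intervalIntegral.integral_nonneg hab (fun x _ => sq_nonneg _)
  have hexp : (∫ x in a..b, (f x - c) ^ 2)
      = (∫ x in a..b, f x ^ 2) - 2 * c * (∫ x in a..b, f x) + c ^ 2 * L := by
    have : ∀ x, (f x - c) ^ 2 = f x ^ 2 - (2 * c) * f x + c ^ 2 := by intro x; ring
    simp only [this]
    rw [intervalIntegral.integral_add ((hf2.sub (hf.const_mul (2*c)))) intervalIntegrable_const,
      intervalIntegral.integral_sub hf2 (hf.const_mul (2*c)),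
      intervalIntegral.integral_const_mul, intervalIntegral.integral_const]
    simp [hL]; ring
  rw [hexp] at h0
  have hcl : c * L = ∫ x in a..b, f x := by rw [hc, div_mul_cancel₀ _ hLpos.ne']
  nlinarith [sq_nonneg c, h0]

lemma aux_n_deriv {N : ℕ} (A : ℝ → Matrix (Fin N) (Fin N) ℝ) (ζ : ℝ → Fin N → ℝ)
    (hζ : ∀ t, 0 ≤ t → HasDerivAt ζ (-(A t).mulVec (ζ t)) t) {s : ℝ} (hs : 0 ≤ s) :
    HasDerivAt (fun τ => ∑ j, ζ τ j ^ 2) (-2 * (ζ s ⬝ᵥ (A s).mulVec (ζ s))) s := by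
  have hj : ∀ j, HasDerivAt (fun τ => ζ τ j) ((-(A s).mulVec (ζ s)) j) s :=
    (hasDerivAt_pi.mp (hζ s hs))
  have h1 : HasDerivAt (fun τ => ∑ j, ζ τ j ^ 2)
      (∑ j, (2:ℝ) * ζ s j ^ 1 * (-(A s).mulVec (ζ s)) j) s := by
    apply HasDerivAt.fun_sum
    intro j _
    exact (hj j).pow 2
  convert h1 using 1
  rw [dotProduct, Finset.mul_sum]
  apply Finset.sum_congr rfl
  intro j _
  simp only [Pi.neg_apply, pow_one]
  ring

lemma aux_n_mono {N : ℕ} (A : ℝ → Matrix (Fin N) (Fin N) ℝ)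
    (hpsd : ∀ t, 0 ≤ t → (A t).PosSemidef) (ζ : ℝ → Fin N → ℝ)
    (hζ : ∀ t, 0 ≤ t → HasDerivAt ζ (-(A t).mulVec (ζ t)) t) :
    AntitoneOn (fun s => ∑ j, ζ s j ^ 2) (Set.Ici 0) := by
  apply antitoneOn_of_deriv_nonpos (convex_Ici 0)
  · intro s hs
    exact ((aux_n_deriv A ζ hζ hs).continuousAt).continuousWithinAt
  · intro s hs
    rw [interior_Ici] at hs
    exact (aux_n_deriv A ζ hζ (le_of_lt hs)).differentiableAt.differentiableWithinAt
  · intro s hs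
    rw [interior_Ici] at hs
    rw [(aux_n_deriv A ζ hζ (le_of_lt hs)).deriv]
    have := (hpsd s (le_of_lt hs)).dotProduct_mulVec_nonneg (ζ s)
    simp only [star_trivial] at this
    linarith

lemma aux_II {f g : ℝ → ℝ} {a b K : ℝ} (hab : a ≤ b) (ha : 0 ≤ a) (hg : Measurable g)
    (hfg : ∀ s, 0 ≤ s → f s = g s) (hbd : ∀ s, 0 ≤ s → |f s| ≤ K) :
    IntervalIntegrable f volume a b := by
  rw [intervalIntegrable_iff, Set.uIoc_of_le hab]
  apply Integrable.mono' (integrable_const K)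
  · have hae : g =ᵐ[volume.restrict (Set.Ioc a b)] f := by
      filter_upwards [ae_restrict_mem measurableSet_Ioc] with s hs
      exact (hfg s (le_trans ha (le_of_lt hs.1))).symm
    exact hg.aestronglyMeasurable.congr hae
  · filter_upwards [ae_restrict_mem measurableSet_Ioc] with s hs
    rw [Real.norm_eq_abs]
    exact hbd s (le_trans ha (le_of_lt hs.1))

set_option maxHeartbeats 2000000 in
lemma aux_window {N : ℕ} (A : ℝ → Matrix (Fin N) (Fin N) ℝ)
    (hsymm : ∀ t, 0 ≤ t → (A t)ᵀ = A t)
    (hpsd : ∀ t, 0 ≤ t → (A t).PosSemidef)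
    {C : ℝ} (hC0 : 0 < C)
    (hC : ∀ t, 0 ≤ t → ∀ x : Fin N → ℝ, x ⬝ᵥ (A t).mulVec x ≤ C * (∑ j, x j ^ 2))
    (V : Submodule ℝ (Fin N → ℝ))
    (T μ : ℝ) (hT : 0 < T) (hμ : 0 < μ)
    (hPE : ∀ x ∈ V, ∀ t ≥ (0 : ℝ),
      μ * (∑ j, x j ^ 2) ≤ (1 / T) * ∫ τ in t..(t + T), x ⬝ᵥ (A τ).mulVec x)
    (ζ : ℝ → Fin N → ℝ)
    (hζ : ∀ t, 0 ≤ t → HasDerivAt ζ (-(A t).mulVec (ζ t)) t)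
    (hmemV : ∀ s, 0 ≤ s → ζ s ∈ V)
    {a : ℝ} (ha : 0 ≤ a) :
    (∑ j, ζ (a + T) j ^ 2) ≤
      (1 - min (μ * T / (1 + C ^ 2 * T ^ 2)) (1 / 2)) * (∑ j, ζ a j ^ 2) := by
  classical
  set n : ℝ → ℝ := fun s => ∑ j, ζ s j ^ 2 with hn
  set q : ℝ → ℝ := fun s => ζ s ⬝ᵥ (A s).mulVec (ζ s) with hq
  set v : ℝ → (Fin N → ℝ) := fun s => -(A s).mulVec (ζ s) with hv
  set b : ℝ := a + T with hb
  have hab : a ≤ b := by rw [hb]; linarith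
  have hnneg : ∀ s, 0 ≤ n s := fun s => Finset.sum_nonneg (fun j _ => sq_nonneg _)
  have hmono : AntitoneOn n (Set.Ici 0) := aux_n_mono A hpsd ζ hζ
  have hn0 : ∀ s, 0 ≤ s → n s ≤ n 0 := fun s hs =>
    hmono Set.self_mem_Ici (Set.mem_Ici.mpr hs) hs
  have hqpos : ∀ s, 0 ≤ s → 0 ≤ q s := by
    intro s hs
    have := (hpsd s hs).dotProduct_mulVec_nonneg (ζ s); simpa [hq] using this
  have hqle : ∀ s, 0 ≤ s → q s ≤ C * n 0 := by
    intro s hs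
    calc q s ≤ C * n s := hC s hs (ζ s)
      _ ≤ C * n 0 := by nlinarith [hn0 s hs]
  -- interval integrability of q
  have hqeq : ∀ s, 0 ≤ s → q s = -(deriv n s) / 2 := by
    intro s hs
    have h := (aux_n_deriv A ζ hζ hs).deriv
    simp only [hq, hn] at h ⊢
    rw [h]; ring
  have hqII : IntervalIntegrable q volume a b := by
    apply aux_II hab ha (((measurable_deriv n).neg).div_const 2) hqeq
    intro s hs
    rw [abs_of_nonneg (hqpos s hs)]
    exact hqle s hs
  set I : ℝ := ∫ s in a..b, q s with hI
  have hIpos : 0 ≤ I :=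
    intervalIntegral.integral_nonneg hab (fun s hs => hqpos s (le_trans ha hs.1))
  -- FTC : 2 I = n a - n b
  have hFTC : ∫ s in a..b, (-2 : ℝ) * q s = n b - n a := by
    apply intervalIntegral.integral_eq_sub_of_hasDerivAt
    · intro s hs
      rw [Set.uIcc_of_le hab] at hs
      have hs0 : 0 ≤ s := le_trans ha hs.1
      have := aux_n_deriv A ζ hζ hs0
      simpa [hn, hq] using this
    · exact hqII.const_mul (-2)
  have h2I : 2 * I = n a - n b := by
    rw [intervalIntegral.integral_const_mul] at hFTC
    rw [hI]; linarith
  -- componentwise derivative facts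
  have hζj : ∀ s, 0 ≤ s → ∀ j, HasDerivAt (fun τ => ζ τ j) (v s j) s := by
    intro s hs j
    exact hasDerivAt_pi.mp (hζ s hs) j
  have hvbd : ∀ s, 0 ≤ s → ∀ j, (v s j) ^ 2 ≤ C ^ 2 * n 0 := by
    intro s hs j
    have h1 : (v s j) ^ 2 ≤ ∑ i, (v s i) ^ 2 :=
      Finset.single_le_sum (f := fun i => (v s i) ^ 2) (fun i _ => sq_nonneg _)
        (Finset.mem_univ j)
    have h2 : (∑ i, (v s i) ^ 2) = ∑ i, ((A s).mulVec (ζ s) i) ^ 2 := by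
      apply Finset.sum_congr rfl; intro i _; simp [hv]
    have h3 : (∑ i, ((A s).mulVec (ζ s) i) ^ 2) ≤ C * q s :=
      aux_sqnorm_mulVec_le (hpsd s hs) (hC s hs) (ζ s)
    have h4 := hqle s hs
    nlinarith
  have hvabs : ∀ s, 0 ≤ s → ∀ j, |v s j| ≤ C * Real.sqrt (n 0) := by
    intro s hs j
    have h1 : |v s j| = Real.sqrt ((v s j) ^ 2) := (Real.sqrt_sq_eq_abs _).symm
    rw [h1]
    have : (C * Real.sqrt (n 0)) ^ 2 = C ^ 2 * n 0 := by
      rw [mul_pow, Real.sq_sqrt (hnneg 0)]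
    calc Real.sqrt ((v s j) ^ 2) ≤ Real.sqrt (C ^ 2 * n 0) :=
          Real.sqrt_le_sqrt (hvbd s hs j)
      _ = C * Real.sqrt (n 0) := by
          rw [← this, Real.sqrt_sq (by positivity)]
  have hvII : ∀ j, IntervalIntegrable (fun s => v s j) volume a b := by
    intro j
    apply aux_II hab ha (measurable_deriv (fun τ => ζ τ j))
    · intro s hs; exact ((hζj s hs j).deriv).symm
    · intro s hs; exact hvabs s hs j
  have hv2II : ∀ j, IntervalIntegrable (fun s => (v s j) ^ 2) volume a b := by
    intro j
    apply aux_II hab ha ((measurable_deriv (fun τ => ζ τ j)).pow_const 2)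
    · intro s hs; rw [(hζj s hs j).deriv]
    · intro s hs
      rw [abs_of_nonneg (sq_nonneg _)]
      exact hvbd s hs j
  -- sum of squares integrable
  have hsII : IntervalIntegrable (fun s => ∑ j, (v s j) ^ 2) volume a b := by
    apply aux_II hab ha (g := fun s => ∑ j, (deriv (fun τ => ζ τ j) s) ^ 2)
    · exact Finset.measurable_sum Finset.univ
        (fun j _ => (measurable_deriv (fun τ => ζ τ j)).pow_const 2)
    · intro s hs
      exact Finset.sum_congr rfl (fun j _ => by rw [(hζj s hs j).deriv])
    · intro s hs
      rw [abs_of_nonneg (Finset.sum_nonneg (fun j _ => sq_nonneg _))]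
      calc (∑ j, (v s j) ^ 2) = ∑ i, ((A s).mulVec (ζ s) i) ^ 2 :=
            Finset.sum_congr rfl (fun i _ => by simp [hv])
        _ ≤ C * q s := aux_sqnorm_mulVec_le (hpsd s hs) (hC s hs) (ζ s)
        _ ≤ C * (C * n 0) := by nlinarith [hqle s hs]
  have hsqI : (∫ s in a..b, ∑ j, (v s j) ^ 2) ≤ C * I := by
    have hpt : ∀ s ∈ Set.Icc a b, (∑ j, (v s j) ^ 2) ≤ C * q s := by
      intro s hs
      have hs0 : 0 ≤ s := le_trans ha hs.1
      have h2 : (∑ i, (v s i) ^ 2) = ∑ i, ((A s).mulVec (ζ s) i) ^ 2 :=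
        Finset.sum_congr rfl (fun i _ => by simp [hv])
      rw [h2]
      exact aux_sqnorm_mulVec_le (hpsd s hs0) (hC s hs0) (ζ s)
    have hmon := intervalIntegral.integral_mono_on hab hsII (hqII.const_mul C) hpt
    rwa [intervalIntegral.integral_const_mul] at hmon
  -- bound on the drift term
  have heFTC : ∀ τ ∈ Set.Icc a b, ∀ j, ζ τ j - ζ a j = ∫ s in a..τ, v s j := by
    intro τ hτ j
    have hsub : Set.uIcc a τ ⊆ Set.uIcc a b := by
      rw [Set.uIcc_of_le hτ.1, Set.uIcc_of_le hab]
      exact Set.Icc_subset_Icc (le_refl a) hτ.2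
    symm
    apply intervalIntegral.integral_eq_sub_of_hasDerivAt
    · intro s hs
      rw [Set.uIcc_of_le hτ.1] at hs
      exact hζj s (le_trans ha hs.1) j
    · exact (hvII j).mono_set hsub
  have hesq : ∀ τ ∈ Set.Icc a b, (∑ j, (ζ τ j - ζ a j) ^ 2) ≤ T * (C * I) := by
    intro τ hτ
    have hsub : Set.uIcc a τ ⊆ Set.uIcc a b := by
      rw [Set.uIcc_of_le hτ.1, Set.uIcc_of_le hab]
      exact Set.Icc_subset_Icc (le_refl a) hτ.2
    have hsub2 : Set.uIcc τ b ⊆ Set.uIcc a b := by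
      rw [Set.uIcc_of_le hτ.2, Set.uIcc_of_le hab]
      exact Set.Icc_subset_Icc hτ.1 (le_refl b)
    have h1 : ∀ j, (ζ τ j - ζ a j) ^ 2 ≤ T * ∫ s in a..b, (v s j) ^ 2 := by
      intro j
      rw [heFTC τ hτ j]
      have hcs := aux_cs_integral hτ.1 ((hvII j).mono_set hsub) ((hv2II j).mono_set hsub)
      have hsplit : (∫ s in a..τ, (v s j) ^ 2) ≤ ∫ s in a..b, (v s j) ^ 2 := by
        have hadd := intervalIntegral.integral_add_adjacent_intervals
          ((hv2II j).mono_set hsub) ((hv2II j).mono_set hsub2)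
        have hnn : 0 ≤ ∫ s in τ..b, (v s j) ^ 2 :=
          intervalIntegral.integral_nonneg hτ.2 (fun s _ => sq_nonneg _)
        linarith
      have hnn2 : 0 ≤ ∫ s in a..τ, (v s j) ^ 2 :=
        intervalIntegral.integral_nonneg hτ.1 (fun s _ => sq_nonneg _)
      have hτT : τ - a ≤ T := by
        have := hτ.2; rw [hb] at this; linarith
      nlinarith [hτ.1, hcs]
    calc (∑ j, (ζ τ j - ζ a j) ^ 2) ≤ ∑ j : Fin N, T * ∫ s in a..b, (v s j) ^ 2 :=
          Finset.sum_le_sum (fun j _ => h1 j)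
      _ = T * ∫ s in a..b, ∑ j, (v s j) ^ 2 := by
          rw [intervalIntegral.integral_finset_sum (fun j _ => hv2II j), Finset.mul_sum]
      _ ≤ T * (C * I) := mul_le_mul_of_nonneg_left hsqI hT.le
  -- pointwise bound on the frozen quadratic form
  have hq0le : ∀ τ ∈ Set.Icc a b,
      ζ a ⬝ᵥ (A τ).mulVec (ζ a) ≤ 2 * q τ + 2 * (C * (T * (C * I))) := by
    intro τ hτ
    have hτ0 : 0 ≤ τ := le_trans ha hτ.1
    set e : Fin N → ℝ := fun j => ζ a j - ζ τ j with he
    have hsum : ζ τ + e = ζ a := by funext j; simp [he]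
    have hsplit := aux_psd_split (hpsd τ hτ0) (hsymm τ hτ0) (ζ τ) e
    rw [hsum] at hsplit
    have h2 : e ⬝ᵥ (A τ).mulVec e ≤ C * (∑ j, e j ^ 2) := hC τ hτ0 e
    have h3 : (∑ j, e j ^ 2) = ∑ j, (ζ τ j - ζ a j) ^ 2 :=
      Finset.sum_congr rfl (fun j _ => by rw [he]; ring)
    have h4 := hesq τ hτ
    have h5 : e ⬝ᵥ (A τ).mulVec e ≤ C * (T * (C * I)) := by
      rw [h3] at h2
      nlinarith
    calc ζ a ⬝ᵥ (A τ).mulVec (ζ a)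
        ≤ 2 * (ζ τ ⬝ᵥ (A τ).mulVec (ζ τ)) + 2 * (e ⬝ᵥ (A τ).mulVec e) := hsplit
      _ ≤ 2 * q τ + 2 * (C * (T * (C * I))) := by
          have : q τ = ζ τ ⬝ᵥ (A τ).mulVec (ζ τ) := by rw [hq]
          rw [this]; linarith
  -- persistence of excitation at time a
  have hPEa := hPE (ζ a) (hmemV a ha) a ha
  rw [← hb] at hPEa
  show n b ≤ (1 - min (μ * T / (1 + C ^ 2 * T ^ 2)) (1 / 2)) * n a
  by_cases hq0II : IntervalIntegrable (fun τ => ζ a ⬝ᵥ (A τ).mulVec (ζ a)) volume a b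
  · have hmon := intervalIntegral.integral_mono_on hab hq0II
      ((hqII.const_mul 2).add intervalIntegrable_const) hq0le
    rw [intervalIntegral.integral_add (hqII.const_mul 2) intervalIntegrable_const,
      intervalIntegral.integral_const_mul, intervalIntegral.integral_const, smul_eq_mul] at hmon
    have hba : b - a = T := by rw [hb]; ring
    rw [hba] at hmon
    have hμT : μ * T * n a ≤ ∫ τ in a..b, ζ a ⬝ᵥ (A τ).mulVec (ζ a) := by
      have h' : μ * n a ≤ (1 / T) * ∫ τ in a..b, ζ a ⬝ᵥ (A τ).mulVec (ζ a) := hPEa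
      have h'' := mul_le_mul_of_nonneg_left h' hT.le
      have h3 : T * ((1 / T) * ∫ τ in a..b, ζ a ⬝ᵥ (A τ).mulVec (ζ a))
          = ∫ τ in a..b, ζ a ⬝ᵥ (A τ).mulVec (ζ a) := by
        field_simp
      rw [h3] at h''
      linarith
    have hTK : T * (2 * (C * (T * (C * I)))) = 2 * C ^ 2 * T ^ 2 * I := by ring
    have hfin : μ * T * n a ≤ (n a - n b) * (1 + C ^ 2 * T ^ 2) := by
      have : (n a - n b) * (1 + C ^ 2 * T ^ 2) = 2 * I + 2 * C ^ 2 * T ^ 2 * I := by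
        rw [← h2I]; ring
      rw [this]
      linarith [hmon, hμT, hTK]
    have hden : (0:ℝ) < 1 + C ^ 2 * T ^ 2 := by positivity
    have hδ : μ * T / (1 + C ^ 2 * T ^ 2) * n a ≤ n a - n b := by
      rw [div_mul_eq_mul_div, div_le_iff₀ hden]
      nlinarith [hfin]
    have hmin : min (μ * T / (1 + C ^ 2 * T ^ 2)) (1/2) * n a
        ≤ μ * T / (1 + C ^ 2 * T ^ 2) * n a :=
      mul_le_mul_of_nonneg_right (min_le_left _ _) (hnneg a)
    have hgoal : n b ≤ n a - min (μ * T / (1 + C ^ 2 * T ^ 2)) (1/2) * n a := by linarith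
    rw [sub_mul, one_mul]
    linarith
  · rw [intervalIntegral.integral_undef hq0II] at hPEa
    have hna : n a = 0 := by
      have h0 : μ * n a ≤ 0 := by simpa using hPEa
      nlinarith [hnneg a]
    have hnb : n b ≤ n a := hmono (Set.mem_Ici.mpr ha) (Set.mem_Ici.mpr (le_trans ha hab)) hab
    have hnb0 : n b = 0 := le_antisymm (by linarith) (hnneg b)
    rw [hnb0, hna, mul_zero]


lemma aux_invariance {N : ℕ} (A : ℝ → Matrix (Fin N) (Fin N) ℝ)
    (hsymm : ∀ t, 0 ≤ t → (A t)ᵀ = A t)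
    (hpsd : ∀ t, 0 ≤ t → (A t).PosSemidef)
    (V : Submodule ℝ (Fin N → ℝ))
    (hinv : ∀ t, 0 ≤ t → ∀ x ∈ V, (A t).mulVec x ∈ V)
    (ζ : ℝ → Fin N → ℝ)
    (hζ : ∀ t, 0 ≤ t → HasDerivAt ζ (-(A t).mulVec (ζ t)) t)
    (h0 : ζ 0 ∈ V) : ∀ t, 0 ≤ t → ζ t ∈ V := by
  classical
  set E := EuclideanSpace ℝ (Fin N)
  set L : (Fin N → ℝ) ≃L[ℝ] E := (EuclideanSpace.equiv (Fin N) ℝ).symm with hLdef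
  set W : Submodule ℝ E := V.map ((L.toLinearEquiv : (Fin N → ℝ) ≃ₗ[ℝ] E) : (Fin N → ℝ) →ₗ[ℝ] E) with hWdef
  have hmem : ∀ x : Fin N → ℝ, L x ∈ W ↔ x ∈ V := by
    intro x
    constructor
    · rintro ⟨y, hy, hyx⟩
      have : y = x := L.injective hyx
      rwa [← this]
    · intro hx
      exact ⟨x, hx, rfl⟩
  have hinner : ∀ a b : E, inner ℝ a b = (L.symm a) ⬝ᵥ (L.symm b) := by
    intro a b
    rw [PiLp.inner_apply]
    simp only [RCLike.inner_apply, conj_trivial, dotProduct]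
    exact Finset.sum_congr rfl (fun i _ => by rw [mul_comm]; rfl)
  set v : ℝ → (Fin N → ℝ) := fun s => -(A s).mulVec (ζ s) with hvdef
  set ζE : ℝ → E := fun s => L (ζ s) with hζEdef
  set P : E →L[ℝ] E := W.subtypeL.comp W.orthogonalProjectionOnto with hPdef
  set w : ℝ → E := fun s => ζE s - P (ζE s) with hwdef
  set w' : ℝ → E := fun s => L (v s) - P (L (v s)) with hw'def
  have hζE : ∀ s, 0 ≤ s → HasDerivAt ζE (L (v s)) s := fun s hs =>
    (L.toContinuousLinearMap.hasFDerivAt.comp_hasDerivAt s (hζ s hs))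
  have hw : ∀ s, 0 ≤ s → HasDerivAt w (w' s) s := fun s hs =>
    (hζE s hs).sub (P.hasFDerivAt.comp_hasDerivAt s (hζE s hs))
  set m : ℝ → ℝ := fun s => inner ℝ (w s) (w s) with hmdef
  have hwo : ∀ s, w s ∈ Wᗮ := fun s => W.sub_starProjection_mem_orthogonal _
  have hkey : ∀ s, 0 ≤ s → inner ℝ (w s) (w' s) ≤ 0 := by
    intro s hs
    have h1 : inner ℝ (w s) (P (L (v s))) = 0 := by
      have := (Submodule.mem_orthogonal W (w s)).mp (hwo s) (P (L (v s)))
        (by simp [hPdef, Submodule.coe_mem])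
      rwa [real_inner_comm] at this
    have h2 : inner ℝ (w s) (w' s) = inner ℝ (w s) (L (v s)) := by
      rw [hw'def]; simp [inner_sub_right, h1]
    rw [h2]
    -- decompose ζ s
    set p : Fin N → ℝ := L.symm (P (ζE s)) with hpdef2
    set u : Fin N → ℝ := L.symm (w s) with hudef
    have hpV : p ∈ V := by
      rw [← hmem p]
      simp only [hpdef2, ContinuousLinearEquiv.apply_symm_apply]
      simp [hPdef, Submodule.coe_mem]
    have hζdec : ζ s = p + u := by
      apply L.injective
      rw [map_add]
      simp only [hpdef2, hudef, ContinuousLinearEquiv.apply_symm_apply, hwdef]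
      show ζE s = P (ζE s) + (ζE s - P (ζE s))
      abel
    have hAp : inner ℝ (w s) (L ((A s).mulVec p)) = 0 := by
      have := (Submodule.mem_orthogonal W (w s)).mp (hwo s) _ ((hmem _).mpr (hinv s hs p hpV))
      rwa [real_inner_comm] at this
    have hAu : 0 ≤ u ⬝ᵥ (A s).mulVec u := by simpa using (hpsd s hs).dotProduct_mulVec_nonneg u
    have : inner ℝ (w s) (L (v s))
        = -(u ⬝ᵥ (A s).mulVec p) - (u ⬝ᵥ (A s).mulVec u) := by
      rw [hinner, ContinuousLinearEquiv.symm_apply_apply, ← hudef, hvdef]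
      simp only [hζdec, mulVec_add, neg_add]
      rw [dotProduct_add]
      simp [dotProduct_neg]
      ring
    rw [this]
    have hup : u ⬝ᵥ (A s).mulVec p = 0 := by
      have := hAp
      rwa [hinner, ContinuousLinearEquiv.symm_apply_apply, ← hudef] at this
    rw [hup]
    linarith
  -- m is antitone on [0, ∞)
  have hm : ∀ s, 0 ≤ s → HasDerivAt m (2 * inner ℝ (w s) (w' s)) s := by
    intro s hs
    have := (hw s hs).inner ℝ (hw s hs)
    refine this.congr_deriv ?_
    rw [real_inner_comm (w' s) (w s)]; ring
  have hmono : AntitoneOn m (Set.Ici 0) := by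
    apply antitoneOn_of_deriv_nonpos (convex_Ici 0)
    · intro s hs
      exact ((hm s hs).continuousAt).continuousWithinAt
    · intro s hs
      rw [interior_Ici] at hs
      exact (hm s (le_of_lt hs)).differentiableAt.differentiableWithinAt
    · intro s hs
      rw [interior_Ici] at hs
      rw [(hm s (le_of_lt hs)).deriv]
      have := hkey s (le_of_lt hs)
      linarith
  have hm0 : m 0 = 0 := by
    have hW0 : ζE 0 ∈ W := (hmem _).mpr h0
    have : P (ζE 0) = ζE 0 := by
      simp only [hPdef, ContinuousLinearMap.comp_apply, Submodule.subtypeL_apply]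
      exact W.starProjection_eq_self_iff.mpr hW0
    simp [hmdef, hwdef, this]
  intro t ht
  have hmt : m t ≤ 0 := by
    have := hmono (Set.self_mem_Ici) (Set.mem_Ici.mpr ht) ht
    rwa [hm0] at this
  have hmt0 : m t = 0 := le_antisymm hmt (real_inner_self_nonneg)
  have hwt : w t = 0 := by
    rwa [hmdef, inner_self_eq_zero] at hmt0
  have hPe : ζE t = P (ζE t) := by
    have h' : ζE t - P (ζE t) = 0 := hwt
    exact (sub_eq_zero.mp h')
  have hWt : ζE t ∈ W := by rw [hPe]; simp [hPdef, Submodule.coe_mem]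
  exact (hmem _).mp hWt


/-- Uniform global exponential stability of `ζ̇ = -A(t)ζ` restricted to a flow-
invariant subspace `V` on which `A` is persistently exciting: `A(t)` is symmetric,
positive semidefinite, bounded, maps `V` into `V`, and satisfies the integral
lower bound `(1/T) xᵀ (∫_t^{t+T} A) x ≥ μ ‖x‖²` on `V`. -/
theorem stmt_11 (N : ℕ) (A : ℝ → Matrix (Fin N) (Fin N) ℝ)
    (hsymm : ∀ t, 0 ≤ t → (A t)ᵀ = A t)
    (hpsd : ∀ t, 0 ≤ t → (A t).PosSemidef)
    (hbound : ∃ C > 0, ∀ t, 0 ≤ t → ∀ x : Fin N → ℝ,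
      x ⬝ᵥ (A t).mulVec x ≤ C * (∑ j, x j ^ 2))
    (V : Submodule ℝ (Fin N → ℝ))
    (hinv : ∀ t, 0 ≤ t → ∀ x ∈ V, (A t).mulVec x ∈ V)
    (T μ : ℝ) (hT : 0 < T) (hμ : 0 < μ)
    (hPE : ∀ x ∈ V, ∀ t ≥ (0 : ℝ),
      μ * (∑ j, x j ^ 2) ≤
        (1 / T) * ∫ τ in t..(t + T), x ⬝ᵥ (A τ).mulVec x) :
    ∃ κ > 0, ∃ lam > 0, ∀ ζ : ℝ → Fin N → ℝ,
      (∀ t, 0 ≤ t → HasDerivAt ζ (-(A t).mulVec (ζ t)) t) →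
      ζ 0 ∈ V →
      ∀ t ≥ (0 : ℝ),
        Real.sqrt (∑ j, ζ t j ^ 2) ≤
          κ * Real.sqrt (∑ j, ζ 0 j ^ 2) * Real.exp (-lam * t) := by
  classical
  obtain ⟨C, hC0, hC⟩ := hbound
  set δ : ℝ := min (μ * T / (1 + C ^ 2 * T ^ 2)) (1 / 2) with hδdef
  have hδpos : 0 < δ := lt_min (by positivity) (by norm_num)
  have hδhalf : δ ≤ 1 / 2 := min_le_right _ _
  set ρ : ℝ := 1 - δ with hρdef
  have hρpos : 0 < ρ := by rw [hρdef]; linarith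
  have hρlt1 : ρ < 1 := by rw [hρdef]; linarith
  set σ : ℝ := Real.sqrt ρ with hσdef
  have hσpos : 0 < σ := Real.sqrt_pos.mpr hρpos
  have hσlt1 : σ < 1 := by
    rw [hσdef, show (1:ℝ) = Real.sqrt 1 from Real.sqrt_one.symm]
    exact Real.sqrt_lt_sqrt hρpos.le hρlt1
  have hlogneg : Real.log σ < 0 := Real.log_neg hσpos hσlt1
  set lam : ℝ := -Real.log σ / T with hlam
  have hlampos : 0 < lam := div_pos (by linarith) hT
  refine ⟨1 / σ, by positivity, lam, hlampos, ?_⟩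
  intro ζ hζ hζ0 t ht
  have hmemV : ∀ s, 0 ≤ s → ζ s ∈ V := aux_invariance A hsymm hpsd V hinv ζ hζ hζ0
  have hwin : ∀ a, 0 ≤ a → (∑ j, ζ (a + T) j ^ 2) ≤ ρ * (∑ j, ζ a j ^ 2) := by
    intro a ha0
    exact aux_window A hsymm hpsd hC0 hC V T μ hT hμ hPE ζ hζ hmemV ha0
  have hmono : AntitoneOn (fun s => ∑ j, ζ s j ^ 2) (Set.Ici 0) := aux_n_mono A hpsd ζ hζ
  have hnneg : ∀ s : ℝ, 0 ≤ ∑ j, ζ s j ^ 2 :=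
    fun s => Finset.sum_nonneg (fun j _ => sq_nonneg _)
  have hiter : ∀ k : ℕ, (∑ j, ζ ((k : ℝ) * T) j ^ 2) ≤ ρ ^ k * (∑ j, ζ 0 j ^ 2) := by
    intro k
    induction k with
    | zero => simp
    | succ k ih =>
      have hk0 : (0:ℝ) ≤ (k : ℝ) * T := by positivity
      have h1 := hwin ((k : ℝ) * T) hk0
      have h2 : ((k + 1 : ℕ) : ℝ) * T = (k : ℝ) * T + T := by push_cast; ring
      rw [h2]
      calc (∑ j, ζ ((k : ℝ) * T + T) j ^ 2) ≤ ρ * (∑ j, ζ ((k : ℝ) * T) j ^ 2) := h1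
        _ ≤ ρ * (ρ ^ k * (∑ j, ζ 0 j ^ 2)) := mul_le_mul_of_nonneg_left ih hρpos.le
        _ = ρ ^ (k + 1) * (∑ j, ζ 0 j ^ 2) := by ring
  set k : ℕ := ⌊t / T⌋₊ with hk
  have hkT : (k : ℝ) * T ≤ t := by
    have h1 : (k : ℝ) ≤ t / T := Nat.floor_le (div_nonneg ht hT.le)
    have h2 : (t / T) * T = t := by field_simp
    nlinarith
  have htk : t < ((k : ℝ) + 1) * T := by
    have h1 : t / T < (k : ℝ) + 1 := Nat.lt_floor_add_one (t / T)
    have h2 : (t / T) * T = t := by field_simp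
    nlinarith
  have hnt : (∑ j, ζ t j ^ 2) ≤ ρ ^ k * (∑ j, ζ 0 j ^ 2) := by
    have hk0 : (0:ℝ) ≤ (k : ℝ) * T := by positivity
    have h1 : (∑ j, ζ t j ^ 2) ≤ (∑ j, ζ ((k : ℝ) * T) j ^ 2) :=
      hmono (Set.mem_Ici.mpr hk0) (Set.mem_Ici.mpr ht) hkT
    exact le_trans h1 (hiter k)
  have hsqrtρ : Real.sqrt (ρ ^ k) = σ ^ k := by
    have h1 : (σ ^ k) ^ 2 = ρ ^ k := by
      rw [← pow_mul, mul_comm, pow_mul, hσdef, Real.sq_sqrt hρpos.le]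
    rw [← h1, Real.sqrt_sq (pow_nonneg hσpos.le k)]
  have hs1 : Real.sqrt (∑ j, ζ t j ^ 2) ≤ σ ^ k * Real.sqrt (∑ j, ζ 0 j ^ 2) := by
    have h1 := Real.sqrt_le_sqrt hnt
    rwa [Real.sqrt_mul (by positivity) _, hsqrtρ] at h1
  have hσk : σ ^ k ≤ (1 / σ) * Real.exp (-lam * t) := by
    have heq : σ ^ k = Real.exp ((k : ℝ) * Real.log σ) := by
      rw [Real.exp_nat_mul, Real.exp_log hσpos]
    have hkt : t / T - 1 < (k : ℝ) := by
      have h2 : (t / T) * T = t := by field_simp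
      nlinarith [htk]
    have hmul : (k : ℝ) * Real.log σ ≤ (t / T - 1) * Real.log σ := by
      nlinarith [hlogneg, hkt]
    have h3 : Real.exp ((k : ℝ) * Real.log σ) ≤ Real.exp ((t / T - 1) * Real.log σ) :=
      Real.exp_le_exp.mpr hmul
    have hrhs : Real.exp ((t / T - 1) * Real.log σ) = (1 / σ) * Real.exp (-lam * t) := by
      rw [show (t / T - 1) * Real.log σ = (-lam * t) + (-Real.log σ) by
        rw [hlam]; field_simp; ring]
      rw [Real.exp_add, Real.exp_neg, Real.exp_log hσpos]
      ring
    rw [heq]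
    rw [hrhs] at h3
    exact h3
  calc Real.sqrt (∑ j, ζ t j ^ 2) ≤ σ ^ k * Real.sqrt (∑ j, ζ 0 j ^ 2) := hs1
    _ ≤ ((1 / σ) * Real.exp (-lam * t)) * Real.sqrt (∑ j, ζ 0 j ^ 2) :=
        mul_le_mul_of_nonneg_right hσk (Real.sqrt_nonneg _)
    _ = (1 / σ) * Real.sqrt (∑ j, ζ 0 j ^ 2) * Real.exp (-lam * t) := by ring
end

section
/- Consider ẋ = f(x,t) with f piecewise continuous, locally Lipschitz, f(0,t)=0, and suppose there exists L(t,x) with λ₁‖x‖² ≤ L ≤ λ₂‖x‖² (λ₁,λ₂>0) and L̇ ≤ -γ xᵀΣ(t)x along solutions, where Σ(t) ≥ 0, ‖Σ(t)‖ ≤ λ_Σ, γ > 0. If (1) there exist T>0, μ>0 with (1/T)x(t)ᵀ∫_t^{t+T}Σ(τ)dτ x(t) ≥ μ‖x(t)‖² for all t along solutions, and (2) L̇ ≤ -(1/c)‖f(x,t)‖² for some c>0, then the origin is exponentially stable, with ‖x(t)‖ ≤ √(λ₂/(λ₁(1-σ))) ‖x(0)‖ exp(-σt/(2T)) where σ =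 1/((1+ρ)(1+ρcT²γλ_Σ)) and ρ = λ₂/(μTγ). -/
open Matrix
open MeasureTheory Set

private lemma dot_sym' {N : ℕ} {M : Matrix (Fin N) (Fin N) ℝ} (hM : M.PosSemidef)
    (u v : Fin N → ℝ) : u ⬝ᵥ M.mulVec v = v ⬝ᵥ M.mulVec u := by
  have hsym : ∀ i j, M j i = M i j := by
    intro i j
    have h := hM.1
    have := congrFun (congrFun h i) j
    simpa [Matrix.conjTranspose_apply] using this
  simp only [dotProduct, Matrix.mulVec, Finset.mul_sum]
  rw [Finset.sum_comm]
  refine Finset.sum_congr rfl fun j _ => Finset.sum_congr rfl fun i _ => ?_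
  rw [hsym i j]; ring

private lemma quad_split' {N : ℕ} {M : Matrix (Fin N) (Fin N) ℝ} (hM : M.PosSemidef)
    {ε : ℝ} (hε : 0 < ε) (a b : Fin N → ℝ) :
    a ⬝ᵥ M.mulVec a ≤ (1 + ε) * (b ⬝ᵥ M.mulVec b)
      + (1 + 1/ε) * ((a - b) ⬝ᵥ M.mulVec (a - b)) := by
  set d : Fin N → ℝ := a - b with hd
  have ha : a = b + d := by simp [hd]
  have expand : a ⬝ᵥ M.mulVec a =
      b ⬝ᵥ M.mulVec b + 2 * (b ⬝ᵥ M.mulVec d) + d ⬝ᵥ M.mulVec d := by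
    rw [ha, add_dotProduct, Matrix.mulVec_add, dotProduct_add,
      dotProduct_add, dot_sym' hM d b]; ring
  have young : 2 * (b ⬝ᵥ M.mulVec d) ≤ ε * (b ⬝ᵥ M.mulVec b) + (1/ε) * (d ⬝ᵥ M.mulVec d) := by
    have h0 := hM.dotProduct_mulVec_nonneg (ε • b - d)
    simp only [star_trivial, sub_dotProduct, dotProduct_sub, Matrix.mulVec_sub,
      Matrix.mulVec_smul, smul_dotProduct, dotProduct_smul, smul_eq_mul] at h0
    rw [dot_sym' hM d b] at h0
    have h2 : 0 ≤ ε * ε * (b ⬝ᵥ M.mulVec b) - 2 * ε * (b ⬝ᵥ M.mulVec d) + d ⬝ᵥ M.mulVec d := by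
      nlinarith [h0]
    have h3 := mul_le_mul_of_nonneg_left h2 (le_of_lt (inv_pos.mpr hε))
    have hεne : ε ≠ 0 := ne_of_gt hε
    have h4 : ε⁻¹ * (ε * ε * (b ⬝ᵥ M.mulVec b) - 2 * ε * (b ⬝ᵥ M.mulVec d)
        + d ⬝ᵥ M.mulVec d) = ε * (b ⬝ᵥ M.mulVec b) - 2 * (b ⬝ᵥ M.mulVec d)
        + ε⁻¹ * (d ⬝ᵥ M.mulVec d) := by
      field_simp
    rw [h4, mul_zero] at h3
    rw [one_div]
    linarith
  linarith

private lemma sq_integral_le' {g : ℝ → ℝ} {a b : ℝ} (hab : a ≤ b)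
    (hm : AEStronglyMeasurable g (volume.restrict (Ioc a b)))
    (hi : IntegrableOn (fun s => g s ^ 2) (Ioc a b)) :
    (∫ s in a..b, g s) ^ 2 ≤ (b - a) * ∫ s in a..b, g s ^ 2 := by
  set μ : Measure ℝ := volume.restrict (Ioc a b) with hμ
  haveI : IsFiniteMeasure μ := by
    constructor
    rw [hμ, Measure.restrict_apply_univ, Real.volume_Ioc]
    exact ENNReal.ofReal_lt_top
  have hba : 0 ≤ b - a := sub_nonneg.mpr hab
  have hμuniv : (μ Set.univ).toReal = b - a := by
    rw [hμ, Measure.restrict_apply_univ, Real.volume_Ioc, ENNReal.toReal_ofReal hba]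
  have hg2 : MemLp g 2 μ := (memLp_two_iff_integrable_sq hm).mpr hi
  have h1 : MemLp (fun _ : ℝ => (1:ℝ)) 2 μ := memLp_const 1
  have hpq : Real.HolderConjugate 2 2 := Real.HolderConjugate.two_two
  have two : (ENNReal.ofReal (2:ℝ)) = 2 := by norm_num
  have hg2' : MemLp g (ENNReal.ofReal (2:ℝ)) μ := by rw [two]; exact hg2
  have h1' : MemLp (fun _ : ℝ => (1:ℝ)) (ENNReal.ofReal (2:ℝ)) μ := by rw [two]; exact h1
  have hH := MeasureTheory.integral_mul_norm_le_Lp_mul_Lq hpq hg2' h1'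
  have hr2 : ∀ y : ℝ, y ^ (2:ℝ) = y ^ (2:ℕ) := fun y => by
    rw [show (2:ℝ) = ((2:ℕ):ℝ) by norm_num, Real.rpow_natCast]
  have e1 : ∫ s, ‖g s‖ ^ (2:ℝ) ∂μ = ∫ s, g s ^ 2 ∂μ := by
    refine integral_congr_ae (Filter.Eventually.of_forall fun s => ?_)
    show ‖g s‖ ^ (2:ℝ) = g s ^ 2
    rw [hr2, Real.norm_eq_abs, sq_abs]
  have e2 : ∫ s, ‖(1:ℝ)‖ ^ (2:ℝ) ∂μ = b - a := by
    simp only [norm_one, Real.one_rpow]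
    rw [integral_const, measureReal_def, hμuniv, smul_eq_mul, mul_one]
  rw [e1, e2] at hH
  have habs : |∫ s, g s ∂μ| ≤ ∫ s, ‖g s‖ ∂μ := norm_integral_le_integral_norm g
  have key : |∫ s, g s ∂μ| ≤ (∫ s, g s ^ 2 ∂μ) ^ ((1:ℝ)/2) * (b-a) ^ ((1:ℝ)/2) := by
    refine habs.trans ?_
    calc ∫ s, ‖g s‖ ∂μ = ∫ s, ‖g s‖ * ‖(1:ℝ)‖ ∂μ := by simp
    _ ≤ _ := hH
  have hIg2 : 0 ≤ ∫ s, g s ^ 2 ∂μ := integral_nonneg fun s => sq_nonneg _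
  have hhalf : ∀ X : ℝ, 0 ≤ X → (X ^ ((1:ℝ)/2)) ^ 2 = X := fun X hX => by
    rw [← Real.rpow_natCast (X ^ ((1:ℝ)/2)) 2, ← Real.rpow_mul hX]
    norm_num
  have hsq := pow_le_pow_left₀ (abs_nonneg _) key 2
  rw [sq_abs, mul_pow, hhalf _ hIg2, hhalf _ hba] at hsq
  rw [intervalIntegral.integral_of_le hab, intervalIntegral.integral_of_le hab]
  calc (∫ s in Ioc a b, g s) ^ 2 = (∫ s, g s ∂μ) ^ 2 := by rw [hμ]
  _ ≤ (∫ s, g s ^ 2 ∂μ) * (b - a) := hsq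
  _ = (b - a) * ∫ s in Ioc a b, g s ^ 2 := by rw [hμ]; ring

set_option maxHeartbeats 2000000 in
/-- Theorem A.2 of the paper: an exponential-stability criterion under persistence
of excitation. If a storage function `L` satisfies `λ₁‖x‖² ≤ L ≤ λ₂‖x‖²`, decays
along solutions both as `L̇ ≤ -γ xᵀΣ(t)x` and as `L̇ ≤ -(1/c)‖f(x,t)‖²`, with
`Σ ≥ 0` bounded and persistently exciting along the solution, then the solution
satisfies the explicit exponential bound. -/
theorem stmt_12 (N : ℕ)
    (f : (Fin N → ℝ) → ℝ → (Fin N → ℝ))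
    (hf0 : ∀ t, f 0 t = 0)
    (x : ℝ → Fin N → ℝ)
    (hsol : ∀ t, 0 ≤ t → HasDerivAt x (f (x t) t) t)
    (Sig : ℝ → Matrix (Fin N) (Fin N) ℝ)
    (hSigpsd : ∀ t, 0 ≤ t → (Sig t).PosSemidef)
    (lamSig : ℝ) (hlamSig : 0 < lamSig)
    (hSigbd : ∀ t, 0 ≤ t → ∀ v : Fin N → ℝ, v ⬝ᵥ (Sig t).mulVec v ≤ lamSig * ∑ j, v j ^ 2)
    (lam₁ lam₂ γ c T μ : ℝ)
    (hlam₁ : 0 < lam₁) (hlam₂ : 0 < lam₂) (hγ : 0 < γ) (hc : 0 < c)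
    (hT : 0 < T) (hμ : 0 < μ)
    (Lf : ℝ → ℝ) (Lf' : ℝ → ℝ)
    (hLlb : ∀ t, 0 ≤ t → lam₁ * (∑ j, x t j ^ 2) ≤ Lf t)
    (hLub : ∀ t, 0 ≤ t → Lf t ≤ lam₂ * (∑ j, x t j ^ 2))
    (hLder : ∀ t, 0 ≤ t → HasDerivAt Lf (Lf' t) t)
    (hLdec : ∀ t, 0 ≤ t → Lf' t ≤ -γ * (x t ⬝ᵥ (Sig t).mulVec (x t)))
    (hLdecf : ∀ t, 0 ≤ t → Lf' t ≤ -(1 / c) * ∑ j, (f (x t) t) j ^ 2)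
    (hPE : ∀ t ≥ (0 : ℝ),
      μ * (∑ j, x t j ^ 2) ≤
        (1 / T) * ∫ τ in t..(t + T), x t ⬝ᵥ (Sig τ).mulVec (x t)) :
    ∀ t ≥ (0 : ℝ),
      Real.sqrt (∑ j, x t j ^ 2) ≤
        Real.sqrt (lam₂ /
            (lam₁ * (1 - (1 / (1 + lam₂ / (μ * T * γ))) *
              (1 / (1 + (lam₂ / (μ * T * γ)) * c * T ^ 2 * γ * lamSig))))) *
          Real.sqrt (∑ j, x 0 j ^ 2) *
          Real.exp (-((1 / (1 + lam₂ / (μ * T * γ))) *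
              (1 / (1 + (lam₂ / (μ * T * γ)) * c * T ^ 2 * γ * lamSig))) * t / (2 * T)) := by
  intro t ht
  set ρ : ℝ := lam₂ / (μ * T * γ) with hρdef
  have hρ : 0 < ρ := by rw [hρdef]; positivity
  set σ : ℝ := (1 / (1 + ρ)) * (1 / (1 + ρ * c * T ^ 2 * γ * lamSig)) with hσdef
  have hden1 : 0 < 1 + ρ := by linarith
  have hden2 : 0 < 1 + ρ * c * T ^ 2 * γ * lamSig := by positivity
  have hσpos : 0 < σ := by rw [hσdef]; positivity
  have hσlt : σ < 1 := by
    rw [hσdef]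
    have h1 : 1 / (1 + ρ) < 1 := by rw [div_lt_one hden1]; linarith
    have h2 : 1 / (1 + ρ * c * T ^ 2 * γ * lamSig) ≤ 1 := by
      rw [div_le_one hden2]
      have : 0 < ρ * c * T ^ 2 * γ * lamSig := by positivity
      linarith
    nlinarith [div_pos one_pos hden1, div_pos one_pos hden2]
  have h1σ : 0 < 1 - σ := by linarith
  have hLnn : ∀ s, 0 ≤ s → 0 ≤ Lf s := fun s hs =>
    le_trans (by positivity) (hLlb s hs)
  -- ε and K
  set ε : ℝ := μ * T * γ / lam₂ with hεdef
  have hε : 0 < ε := by rw [hεdef]; positivity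
  have h1ε : 0 < 1 + ε := by linarith
  set K : ℝ := γ * (1 + 1/ε) * lamSig / (1 + ε) with hKdef
  have hK : 0 ≤ K := by
    rw [hKdef]
    have : 0 ≤ 1 + 1/ε := by positivity
    positivity
  -- THE STEP LEMMA
  have step : ∀ a, 0 ≤ a → Lf (a + T) ≤ (1 - σ) * Lf a := by
    intro a ha
    have hab : a ≤ a + T := by linarith
    have hmemIcc : ∀ s ∈ Set.Icc a (a+T), (0:ℝ) ≤ s := fun s hs => le_trans ha hs.1
    have hmemIoc : ∀ s ∈ Set.Ioc a (a+T), (0:ℝ) ≤ s := fun s hs => le_trans ha hs.1.le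
    have hmemIoo : ∀ s ∈ Set.Ioo a (a+T), (0:ℝ) ≤ s := fun s hs => le_trans ha hs.1.le
    have hxcont : ContinuousOn x (Set.Icc a (a+T)) := fun s hs =>
      ((hsol s (hmemIcc s hs)).continuousAt).continuousWithinAt
    set F : ℝ → ℝ := fun s => ∑ j, (f (x s) s) j ^ 2 with hFdef
    have hFnn : ∀ s, 0 ≤ F s := fun s => Finset.sum_nonneg fun j _ => sq_nonneg _
    have hderivm : Measurable (deriv x) := measurable_deriv x
    have hagree : ∀ s, 0 ≤ s → deriv x s = f (x s) s := fun s hs => (hsol s hs).deriv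
    have hFm : AEStronglyMeasurable F (volume.restrict (Set.Ioc a (a+T))) := by
      have h1 : Measurable fun s => ∑ j, (deriv x s) j ^ 2 :=
        Finset.measurable_sum _ fun j _ =>
          ((measurable_pi_apply j).comp hderivm).pow_const 2
      refine h1.aestronglyMeasurable.congr ?_
      refine (ae_restrict_iff' measurableSet_Ioc).mpr
        (Filter.Eventually.of_forall fun s hs => ?_)
      have hag := hagree s (hmemIoc s hs)
      simp only [hFdef, hag]
    have hfjm : ∀ j, AEStronglyMeasurable (fun s => f (x s) s j)
        (volume.restrict (Set.Ioc a (a+T))) := by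
      intro j
      have h1 : Measurable fun s => (deriv x s) j :=
        (measurable_pi_apply j).comp hderivm
      refine h1.aestronglyMeasurable.congr ?_
      refine (ae_restrict_iff' measurableSet_Ioc).mpr
        (Filter.Eventually.of_forall fun s hs => ?_)
      simp only [hagree s (hmemIoc s hs)]
    -- -Lf' is integrable
    have hL'int : IntegrableOn (fun s => -Lf' s) (Set.Ioc a (a+T)) := by
      apply intervalIntegral.integrableOn_deriv_of_nonneg
        (g := fun s => -Lf s) (g' := fun s => -Lf' s)
      · exact fun s hs => ((hLder s (hmemIcc s hs)).neg).continuousAt.continuousWithinAt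
      · exact fun s hs => (hLder s (hmemIoo s hs)).neg
      · intro s hs
        have h1 := hLdec s (hmemIoo s hs)
        have h2 := (hSigpsd s (hmemIoo s hs)).dotProduct_mulVec_nonneg (x s)
        simp only [star_trivial] at h2
        nlinarith
    have hFint : IntegrableOn F (Set.Ioc a (a+T)) := by
      refine Integrable.mono' (hL'int.const_mul c) hFm ?_
      refine (ae_restrict_iff' measurableSet_Ioc).mpr
        (Filter.Eventually.of_forall fun s hs => ?_)
      have h1 := hLdecf s (hmemIoc s hs)
      rw [Real.norm_eq_abs, abs_of_nonneg (hFnn s)]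
      have h3 : (1/c) * F s ≤ -Lf' s := by rw [hFdef]; linarith
      calc F s = c * ((1/c) * F s) := by field_simp
      _ ≤ c * (-Lf' s) := mul_le_mul_of_nonneg_left h3 hc.le
    have hFii : IntervalIntegrable F volume a (a+T) :=
      (intervalIntegrable_iff_integrableOn_Ioc_of_le hab).mpr hFint
    -- integral of F bounded by decrease of Lf
    have hIFb : ∫ s in a..(a+T), F s ≤ c * (Lf a - Lf (a+T)) := by
      have h := intervalIntegral.integral_le_sub_of_hasDeriv_right_of_le hab
        (g := fun s => -Lf s) (g' := fun s => -Lf' s) (φ := fun s => (1/c) * F s)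
        (fun s hs => ((hLder s (hmemIcc s hs)).neg).continuousAt.continuousWithinAt)
        (fun s hs => ((hLder s (hmemIoo s hs)).neg).hasDerivWithinAt)
        (by
          rw [integrableOn_Icc_iff_integrableOn_Ioc]
          exact hFint.const_mul (1/c))
        (fun s hs => by
          have h1 := hLdecf s (hmemIoo s hs)
          rw [hFdef]; simp only; linarith)
      rw [intervalIntegral.integral_const_mul] at h
      have h2 : (1/c) * ∫ s in a..(a+T), F s ≤ Lf a - Lf (a+T) := by linarith
      calc ∫ s in a..(a+T), F s = c * ((1/c) * ∫ s in a..(a+T), F s) := by field_simp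
      _ ≤ c * (Lf a - Lf (a+T)) := mul_le_mul_of_nonneg_left h2 hc.le
    have hIFnn : 0 ≤ ∫ s in a..(a+T), F s :=
      intervalIntegral.integral_nonneg hab fun s _ => hFnn s
    -- component integrability
    have hvolfin : volume (Set.Ioc a (a+T)) < ⊤ := by
      rw [Real.volume_Ioc]; exact ENNReal.ofReal_lt_top
    have hfjint : ∀ j, IntegrableOn (fun s => f (x s) s j) (Set.Ioc a (a+T)) := by
      intro j
      refine Integrable.mono' (g := fun s => (1 + F s)/2) ?_ (hfjm j) ?_
      · exact ((integrableOn_const hvolfin.ne).add hFint).div_const 2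
      · refine Filter.Eventually.of_forall fun s => ?_
        rw [Real.norm_eq_abs]
        have h1 : f (x s) s j ^ 2 ≤ F s := by
          rw [hFdef]
          exact Finset.single_le_sum (fun i _ => sq_nonneg ((f (x s) s) i)) (Finset.mem_univ j)
        nlinarith [sq_abs (f (x s) s j), abs_nonneg (f (x s) s j),
          sq_nonneg (|f (x s) s j| - 1)]
    have hfj2int : ∀ j, IntegrableOn (fun s => f (x s) s j ^ 2) (Set.Ioc a (a+T)) := by
      intro j
      have hm2 : AEStronglyMeasurable (fun s => f (x s) s j ^ 2)
          (volume.restrict (Set.Ioc a (a+T))) := by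
        refine ((hfjm j).mul (hfjm j)).congr ?_
        exact Filter.Eventually.of_forall fun s => (pow_two (f (x s) s j)).symm
      refine Integrable.mono' hFint hm2 ?_
      refine Filter.Eventually.of_forall fun s => ?_
      rw [Real.norm_eq_abs, abs_of_nonneg (sq_nonneg _)]
      rw [hFdef]
      exact Finset.single_le_sum (fun i _ => sq_nonneg ((f (x s) s) i)) (Finset.mem_univ j)
    -- FTC for components
    have hcomp : ∀ τ ∈ Set.Icc a (a+T), ∀ j,
        ∫ s in a..τ, f (x s) s j = x τ j - x a j := by
      intro τ hτ j
      refine intervalIntegral.integral_eq_sub_of_hasDerivAt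
        (f := fun s => x s j) (f' := fun s => f (x s) s j) ?_ ?_
      · intro s hs
        rw [Set.uIcc_of_le hτ.1] at hs
        exact hasDerivAt_pi.mp (hsol s (le_trans ha hs.1)) j
      · exact (intervalIntegrable_iff_integrableOn_Ioc_of_le hτ.1).mpr
          ((hfjint j).mono_set (Set.Ioc_subset_Ioc le_rfl hτ.2))
    -- pointwise bound on the drift
    have hE2 : ∀ τ ∈ Set.Icc a (a+T),
        (∑ j, (x τ j - x a j) ^ 2) ≤ T * (c * (Lf a - Lf (a+T))) := by
      intro τ hτ
      have haτ : a ≤ τ := hτ.1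
      have hτb : τ ≤ a + T := hτ.2
      have hsum : ∀ j, (x τ j - x a j) ^ 2 ≤ T * ∫ s in a..τ, f (x s) s j ^ 2 := by
        intro j
        rw [← hcomp τ hτ j]
        have hmes : AEStronglyMeasurable (fun s => f (x s) s j)
            (volume.restrict (Set.Ioc a τ)) :=
          (hfjm j).mono_measure (Measure.restrict_mono (Set.Ioc_subset_Ioc le_rfl hτb) le_rfl)
        have hint2 : IntegrableOn (fun s => f (x s) s j ^ 2) (Set.Ioc a τ) :=
          (hfj2int j).mono_set (Set.Ioc_subset_Ioc le_rfl hτb)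
        have hCS := sq_integral_le' haτ hmes hint2
        refine hCS.trans ?_
        have hnn : 0 ≤ ∫ s in a..τ, f (x s) s j ^ 2 :=
          intervalIntegral.integral_nonneg haτ fun s _ => sq_nonneg _
        exact mul_le_mul_of_nonneg_right (by linarith) hnn
      have hsum2 : (∑ j, (x τ j - x a j) ^ 2) ≤ T * ∫ s in a..τ, F s := by
        calc (∑ j, (x τ j - x a j) ^ 2) ≤ ∑ j, T * ∫ s in a..τ, f (x s) s j ^ 2 :=
          Finset.sum_le_sum fun j _ => hsum j
        _ = T * ∑ j, ∫ s in a..τ, f (x s) s j ^ 2 := by rw [Finset.mul_sum]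
        _ = T * ∫ s in a..τ, F s := by
            rw [← intervalIntegral.integral_finset_sum]
            intro j _
            exact (intervalIntegrable_iff_integrableOn_Ioc_of_le haτ).mpr
              ((hfj2int j).mono_set (Set.Ioc_subset_Ioc le_rfl hτb))
      refine hsum2.trans ?_
      have hmono : ∫ s in a..τ, F s ≤ ∫ s in a..(a+T), F s := by
        refine intervalIntegral.integral_mono_interval le_rfl haτ hτb ?_ hFii
        exact Filter.Eventually.of_forall fun s => hFnn s
      exact mul_le_mul_of_nonneg_left (hmono.trans hIFb) hT.le
    -- the frozen quadratic form W0
    set W0 : ℝ → ℝ := fun τ => x a ⬝ᵥ (Sig τ).mulVec (x a) with hW0def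
    have hW0int : IntervalIntegrable W0 volume a (a+T) := by
      by_contra hni
      have h0 : (∫ τ in a..(a+T), W0 τ) = 0 := intervalIntegral.integral_undef hni
      have hpe := hPE a ha
      rw [← hW0def] at hpe
      rw [h0, mul_zero] at hpe
      have hn2a : (∑ j, x a j ^ 2) = 0 := by
        have hnn : 0 ≤ ∑ j, x a j ^ 2 := Finset.sum_nonneg fun j _ => sq_nonneg _
        nlinarith
      have hxa : x a = 0 := by
        funext j
        have h0j := (Finset.sum_eq_zero_iff_of_nonneg (fun i _ => sq_nonneg (x a i))).mp hn2a j
          (Finset.mem_univ j)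
        have hxj : x a j = 0 := pow_eq_zero_iff (by norm_num : (2:ℕ) ≠ 0) |>.mp h0j
        simpa using hxj
      apply hni
      have hW00 : W0 = fun _ => (0:ℝ) := by
        funext τ; rw [hW0def]; simp [hxa]
      rw [hW00]
      exact intervalIntegrable_const
    have hW0IccInt : IntegrableOn W0 (Set.Icc a (a+T)) :=
      (intervalIntegrable_iff_integrableOn_Icc_of_le hab).mp hW0int
    have hW0lb : μ * T * (∑ j, x a j ^ 2) ≤ ∫ τ in a..(a+T), W0 τ := by
      have hpe := hPE a ha
      rw [← hW0def] at hpe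
      have := mul_le_mul_of_nonneg_left hpe hT.le
      calc μ * T * (∑ j, x a j ^ 2) = T * (μ * (∑ j, x a j ^ 2)) := by ring
      _ ≤ T * ((1/T) * ∫ τ in a..(a+T), W0 τ) := this
      _ = ∫ τ in a..(a+T), W0 τ := by
          rw [← mul_assoc, mul_one_div, div_self hT.ne', one_mul]
    -- continuity and integrability of the drift term
    have hE2cont : ContinuousOn (fun τ => ∑ j, (x τ j - x a j) ^ 2) (Set.Icc a (a+T)) := by
      apply continuousOn_finset_sum
      intro j _
      exact (((continuous_apply j).comp_continuousOn hxcont).sub continuousOn_const).pow 2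
    have hE2ii : IntervalIntegrable (fun τ => ∑ j, (x τ j - x a j) ^ 2) volume a (a+T) := by
      apply ContinuousOn.intervalIntegrable
      rwa [Set.uIcc_of_le hab]
    -- main differential inequality
    have hφint : IntegrableOn
        (fun τ => -(γ/(1+ε)) * W0 τ + K * (∑ j, (x τ j - x a j) ^ 2))
        (Set.Icc a (a+T)) := by
      refine (hW0IccInt.const_mul _).add ?_
      exact ((intervalIntegrable_iff_integrableOn_Icc_of_le hab).mp hE2ii).const_mul K
    have hmain : Lf (a+T) - Lf a ≤
        ∫ τ in a..(a+T), (-(γ/(1+ε)) * W0 τ + K * (∑ j, (x τ j - x a j) ^ 2)) := by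
      refine intervalIntegral.sub_le_integral_of_hasDeriv_right_of_le hab
        (g := Lf) (g' := Lf')
        (fun s hs => (hLder s (hmemIcc s hs)).continuousAt.continuousWithinAt)
        (fun s hs => (hLder s (hmemIoo s hs)).hasDerivWithinAt)
        hφint (fun s hs => ?_)
      have hs0 : (0:ℝ) ≤ s := hmemIoo s hs
      have h1 := hLdec s hs0
      have hq := quad_split' (hSigpsd s hs0) hε (x a) (x s)
      have hb2 := hSigbd s hs0 (x a - x s)
      have hswap : (∑ j, (x a - x s) j ^ 2) = ∑ j, (x s j - x a j) ^ 2 := by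
        refine Finset.sum_congr rfl fun j _ => ?_
        simp only [Pi.sub_apply]; ring
      rw [hswap] at hb2
      -- combine
      have hcomb : W0 s - (1 + 1/ε) * (lamSig * ∑ j, (x s j - x a j) ^ 2) ≤
          (1+ε) * (x s ⬝ᵥ (Sig s).mulVec (x s)) := by
        have h3 : (1 + 1/ε) * ((x a - x s) ⬝ᵥ (Sig s).mulVec (x a - x s)) ≤
            (1 + 1/ε) * (lamSig * ∑ j, (x s j - x a j) ^ 2) :=
          mul_le_mul_of_nonneg_left hb2 (by have h := one_div_pos.mpr hε; linarith)
        rw [hW0def]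
        linarith
      have hmul := mul_le_mul_of_nonneg_left hcomb (div_nonneg hγ.le h1ε.le)
      have heq1 : (γ/(1+ε)) * ((1+ε) * (x s ⬝ᵥ (Sig s).mulVec (x s))) =
          γ * (x s ⬝ᵥ (Sig s).mulVec (x s)) := by field_simp
      have heq2 : (γ/(1+ε)) * (W0 s - (1 + 1/ε) * (lamSig * ∑ j, (x s j - x a j) ^ 2)) =
          (γ/(1+ε)) * W0 s - K * (∑ j, (x s j - x a j) ^ 2) := by
        rw [hKdef]; field_simp
      rw [heq1, heq2] at hmul
      linarith
    -- compute/bound the integral of φ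
    have hφsplit : (∫ τ in a..(a+T),
          (-(γ/(1+ε)) * W0 τ + K * (∑ j, (x τ j - x a j) ^ 2))) =
        -(γ/(1+ε)) * (∫ τ in a..(a+T), W0 τ)
          + K * ∫ τ in a..(a+T), (∑ j, (x τ j - x a j) ^ 2) := by
      rw [intervalIntegral.integral_add (hW0int.const_mul _) (hE2ii.const_mul _),
        intervalIntegral.integral_const_mul, intervalIntegral.integral_const_mul]
    have hE2intbound : (∫ τ in a..(a+T), (∑ j, (x τ j - x a j) ^ 2)) ≤
        T * (T * (c * (Lf a - Lf (a+T)))) := by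
      have h1 : (∫ τ in a..(a+T), (∑ j, (x τ j - x a j) ^ 2)) ≤
          ∫ _ in a..(a+T), T * (c * (Lf a - Lf (a+T))) :=
        intervalIntegral.integral_mono_on hab hE2ii intervalIntegrable_const hE2
      rw [intervalIntegral.integral_const, smul_eq_mul] at h1
      calc (∫ τ in a..(a+T), (∑ j, (x τ j - x a j) ^ 2)) ≤
          (a + T - a) * (T * (c * (Lf a - Lf (a+T)))) := h1
      _ = T * (T * (c * (Lf a - Lf (a+T)))) := by ring
    -- put it together
    have hIW0 : -(γ/(1+ε)) * (∫ τ in a..(a+T), W0 τ) ≤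
        -(γ/(1+ε)) * (μ * T * (∑ j, x a j ^ 2)) := by
      have hcoef : 0 ≤ γ/(1+ε) := div_nonneg hγ.le h1ε.le
      nlinarith [hW0lb]
    have hKE2 : K * (∫ τ in a..(a+T), (∑ j, (x τ j - x a j) ^ 2)) ≤
        K * (T * (T * (c * (Lf a - Lf (a+T))))) :=
      mul_le_mul_of_nonneg_left hE2intbound hK
    have hineq : Lf (a+T) - Lf a ≤
        -(γ/(1+ε)) * (μ * T * (∑ j, x a j ^ 2))
          + K * T^2 * c * (Lf a - Lf (a+T)) := by
      rw [hφsplit] at hmain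
      have hKE2' : K * (∫ τ in a..(a+T), (∑ j, (x τ j - x a j) ^ 2)) ≤
          K * T^2 * c * (Lf a - Lf (a+T)) := hKE2.trans_eq (by ring)
      linarith [hIW0, hKE2']
    -- final algebra of the step
    have hA : 0 < 1 + K * T^2 * c := by positivity
    have hn2a : Lf a ≤ lam₂ * (∑ j, x a j ^ 2) := hLub a ha
    have hσid : σ * (1 + K * T^2 * c) = (γ/(1+ε)) * μ * T / lam₂ := by
      rw [hσdef, hKdef, hεdef, hρdef]
      field_simp
      ring
    have hC1 : 0 ≤ (γ/(1+ε)) * μ * T := by positivity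
    have h7 : ((γ/(1+ε)) * μ * T / lam₂) * Lf a ≤
        (γ/(1+ε)) * (μ * T * (∑ j, x a j ^ 2)) := by
      have h8 : ((γ/(1+ε)) * μ * T / lam₂) * Lf a ≤
          ((γ/(1+ε)) * μ * T / lam₂) * (lam₂ * (∑ j, x a j ^ 2)) :=
        mul_le_mul_of_nonneg_left hn2a (by positivity)
      refine h8.trans_eq ?_
      field_simp
    have h6 : σ * Lf a * (1 + K * T^2 * c) ≤ (Lf a - Lf (a+T)) * (1 + K * T^2 * c) := by
      calc σ * Lf a * (1 + K * T^2 * c) = (σ * (1 + K * T^2 * c)) * Lf a := by ring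
      _ = ((γ/(1+ε)) * μ * T / lam₂) * Lf a := by rw [hσid]
      _ ≤ (γ/(1+ε)) * (μ * T * (∑ j, x a j ^ 2)) := h7
      _ ≤ (Lf a - Lf (a+T)) * (1 + K * T^2 * c) := by nlinarith [hineq]
    have h9 : σ * Lf a ≤ Lf a - Lf (a+T) := le_of_mul_le_mul_right h6 hA
    linarith
  -- Lf is antitone on [0, ∞)
  have anti : AntitoneOn Lf (Set.Ici 0) := by
    refine antitoneOn_of_deriv_nonpos (convex_Ici 0)
      (fun s hs => (hLder s hs).continuousAt.continuousWithinAt) ?_ ?_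
    · intro s hs
      rw [interior_Ici] at hs
      exact ((hLder s hs.le).differentiableAt).differentiableWithinAt
    · intro s hs
      rw [interior_Ici] at hs
      rw [(hLder s hs.le).deriv]
      have h2 := (hSigpsd s hs.le).dotProduct_mulVec_nonneg (x s)
      simp only [star_trivial] at h2
      have h1 := hLdec s hs.le
      nlinarith
  have iter : ∀ k : ℕ, Lf ((k:ℝ) * T) ≤ (1 - σ)^k * Lf 0 := by
    intro k
    induction k with
    | zero => simp
    | succ n ih =>
      have h1 := step ((n:ℝ) * T) (by positivity)
      have h2 : ((n+1 : ℕ) : ℝ) * T = (n:ℝ) * T + T := by push_cast; ring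
      rw [h2]
      calc Lf ((n:ℝ) * T + T) ≤ (1-σ) * Lf ((n:ℝ)*T) := h1
      _ ≤ (1-σ) * ((1-σ)^n * Lf 0) := mul_le_mul_of_nonneg_left ih (by linarith)
      _ = (1-σ)^(n+1) * Lf 0 := by ring
  set k : ℕ := ⌊t/T⌋₊ with hkdef
  have htT : 0 ≤ t / T := div_nonneg ht hT.le
  have hkT : (k:ℝ) * T ≤ t := by
    have h1 : (k:ℝ) ≤ t/T := Nat.floor_le htT
    have h2 := mul_le_mul_of_nonneg_right h1 hT.le
    calc (k:ℝ)*T ≤ (t/T)*T := h2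
    _ = t := by field_simp
  have hkT0 : (0:ℝ) ≤ (k:ℝ)*T := by positivity
  have h1 : Lf t ≤ Lf ((k:ℝ)*T) := anti (Set.mem_Ici.mpr hkT0) (Set.mem_Ici.mpr ht) hkT
  have h3 : lam₁ * (∑ j, x t j ^ 2) ≤ (1-σ)^k * (lam₂ * ∑ j, x 0 j ^ 2) := by
    calc lam₁ * (∑ j, x t j ^ 2) ≤ Lf t := hLlb t ht
    _ ≤ (1-σ)^k * Lf 0 := h1.trans (iter k)
    _ ≤ (1-σ)^k * (lam₂ * ∑ j, x 0 j ^ 2) :=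
      mul_le_mul_of_nonneg_left (hLub 0 le_rfl) (pow_nonneg (by linarith) k)
  have hexp1 : 1 - σ ≤ Real.exp (-σ) := by
    have := Real.add_one_le_exp (-σ); linarith
  have hexp2 : (1-σ)^(k+1) ≤ Real.exp (-(σ*t/T)) := by
    calc (1-σ)^(k+1) ≤ (Real.exp (-σ))^(k+1) :=
      pow_le_pow_left₀ (by linarith) hexp1 (k+1)
    _ = Real.exp (-σ * ((k:ℝ)+1)) := by
        rw [← Real.exp_nat_mul]; congr 1; push_cast; ring
    _ ≤ Real.exp (-(σ*t/T)) := by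
        apply Real.exp_le_exp.mpr
        have h4 : t/T ≤ (k:ℝ)+1 := le_of_lt (Nat.lt_floor_add_one _)
        have h5 := mul_le_mul_of_nonneg_left h4 hσpos.le
        have h6 : σ * (t/T) = σ * t / T := by ring
        rw [h6] at h5
        linarith
  have hpowk : (1-σ)^k ≤ Real.exp (-(σ*t/T)) / (1-σ) := by
    rw [le_div_iff₀ h1σ]
    calc (1-σ)^k * (1-σ) = (1-σ)^(k+1) := by ring
    _ ≤ _ := hexp2
  have hn20 : 0 ≤ ∑ j, x 0 j ^ 2 := Finset.sum_nonneg fun j _ => sq_nonneg _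
  have hfin : (∑ j, x t j ^ 2) ≤
      (lam₂ / (lam₁ * (1-σ))) * (∑ j, x 0 j ^ 2) * Real.exp (-(σ*t/T)) := by
    have e4 : lam₁ * (∑ j, x t j ^ 2) ≤
        (Real.exp (-(σ*t/T)) / (1-σ)) * (lam₂ * ∑ j, x 0 j ^ 2) := by
      refine h3.trans ?_
      exact mul_le_mul_of_nonneg_right hpowk (by positivity)
    rw [← le_div_iff₀' hlam₁] at e4
    refine e4.trans_eq ?_
    rw [div_eq_iff hlam₁.ne']
    field_simp
  have hP : 0 ≤ lam₂ / (lam₁ * (1-σ)) := by positivity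
  have hsq := Real.sqrt_le_sqrt hfin
  rw [Real.sqrt_mul (by positivity : (0:ℝ) ≤ lam₂ / (lam₁ * (1-σ)) * (∑ j, x 0 j ^ 2)),
    Real.sqrt_mul hP] at hsq
  refine hsq.trans (le_of_eq ?_)
  congr 1
  rw [← Real.exp_half]
  congr 1
  ring
end
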